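/- arXiv:2410.07052 — 7 statements merged into one kernel-verified Lean document; each statement's English description precedes it below -/
import Mathlib

section
/- If a Jordan homomorphism φ : R → R' is the sum of a homomorphism and an antihomomorphism on the whole ring R (taking I = R in the definition), then φ is splittable, i.e., V_φ ∩ W_φ = {0}. -/
/-- An additive map `φ` between (possibly non-unital) associative rings is a
Jordan homomorphism if `φ(x²) = φ(x)²` and `φ(xyx) = φ(x)φ(y)φ(x)`. -/
def IsJordanHom {R R' : Type*} [NonUnitalRing R] [NonUnitalRing R'] (φ : R → R') : Prop :=
  (∀ x y : R, φ (x + y) = φ x + φ y) ∧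
  (∀ x : R, φ (x * x) = φ x * φ x) ∧
  (∀ x y : R, φ (x * y * x) = φ x * φ y * φ x)

/-- `R'_φ`: the (non-unital) subring of `R'` generated by the image of `φ`. -/
def rngGen {R R' : Type*} [NonUnitalRing R] [NonUnitalRing R'] (φ : R → R') :
    NonUnitalSubring R' :=
  NonUnitalSubring.closure (Set.range φ)

/-- `V_φ`: the two-sided ideal of `R'_φ` generated by all `{x,y} = φ(xy) − φ(x)φ(y)`. -/
def Vphi {R R' : Type*} [NonUnitalRing R] [NonUnitalRing R'] (φ : R → R') :
    TwoSidedIdeal (rngGen φ) :=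
  TwoSidedIdeal.span {a : rngGen φ | ∃ x y : R, (a : R') = φ (x * y) - φ x * φ y}

/-- `W_φ`: the two-sided ideal of `R'_φ` generated by all `⟨x,y⟩ = φ(xy) − φ(y)φ(x)`. -/
def Wphi {R R' : Type*} [NonUnitalRing R] [NonUnitalRing R'] (φ : R → R') :
    TwoSidedIdeal (rngGen φ) :=
  TwoSidedIdeal.span {a : rngGen φ | ∃ x y : R, (a : R') = φ (x * y) - φ y * φ x}

/-- `φ` is splittable if `V_φ ∩ W_φ = {0}`. -/
def Splittable {R R' : Type*} [NonUnitalRing R] [NonUnitalRing R'] (φ : R → R') : Prop :=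
  Vphi φ ⊓ Wphi φ = ⊥

/-- The commutator ideal of `R`: the two-sided ideal generated by all `xy − yx`. -/
def commutatorIdeal (R : Type*) [NonUnitalRing R] : TwoSidedIdeal R :=
  TwoSidedIdeal.span {z : R | ∃ x y : R, z = x * y - y * x}

/-- `φ` is the sum of the homomorphism `φ₁` and the antihomomorphism `φ₂` on the ideal
`I` of `R`; here `φ₁, φ₂ : R → R'_φ` are only constrained on `I`. -/
def IsSumHomAntihomWith {R R' : Type*} [NonUnitalRing R] [NonUnitalRing R']
    (φ : R → R') (I : TwoSidedIdeal R) (φ₁ φ₂ : R → rngGen φ) : Prop :=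
  (∀ u ∈ I, ∀ v ∈ I, φ₁ (u + v) = φ₁ u + φ₁ v) ∧
  (∀ u ∈ I, ∀ v ∈ I, φ₂ (u + v) = φ₂ u + φ₂ v) ∧
  (∀ u ∈ I, ∀ v ∈ I, φ₁ (u * v) = φ₁ u * φ₁ v) ∧
  (∀ u ∈ I, ∀ v ∈ I, φ₂ (u * v) = φ₂ v * φ₂ u) ∧
  (∀ u ∈ I, φ u = (φ₁ u : R') + (φ₂ u : R')) ∧
  (∃ J₁ J₂ : TwoSidedIdeal (rngGen φ),
    (∀ u ∈ I, φ₁ u ∈ J₁) ∧ (∀ u ∈ I, φ₂ u ∈ J₂) ∧ J₁ ⊓ J₂ = ⊥) ∧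
  (∀ u ∈ I, ∀ x : R, (φ₁ (u * x) : R') = (φ₁ u : R') * φ x ∧
      (φ₁ (x * u) : R') = φ x * (φ₁ u : R')) ∧
  (∀ u ∈ I, ∀ x : R, (φ₂ (u * x) : R') = φ x * (φ₂ u : R') ∧
      (φ₂ (x * u) : R') = (φ₂ u : R') * φ x)

/-- `φ` is the sum of a homomorphism and an antihomomorphism on the ideal `I` of `R`. -/
def IsSumHomAntihomOn {R R' : Type*} [NonUnitalRing R] [NonUnitalRing R']
    (φ : R → R') (I : TwoSidedIdeal R) : Prop :=
  ∃ φ₁ φ₂ : R → rngGen φ, IsSumHomAntihomWith φ I φ₁ φ₂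

/-- If a Jordan homomorphism is the sum of a homomorphism and an antihomomorphism on
the whole ring `R` (i.e. on the ideal `I = R`), then it is splittable. -/
theorem splittable_of_isSumHomAntihom {R R' : Type*} [NonUnitalRing R] [NonUnitalRing R']
    (φ : R → R') (hφ : IsJordanHom φ) (h : IsSumHomAntihomOn φ (⊤ : TwoSidedIdeal R)) :
    Splittable φ := by

  obtain ⟨φ₁, φ₂, _, _, hm1, hm2, hsum, ⟨J₁, J₂, hJ1, hJ2, hJ⟩, _, _⟩ := h
  have h1 : ∀ u : R, φ₁ u ∈ J₁ := fun u => hJ1 u trivial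
  have h2 : ∀ u : R, φ₂ u ∈ J₂ := fun u => hJ2 u trivial
  have key : ∀ (a : rngGen φ) (x y : R), (a : R') = φ (x * y) - φ x * φ y → a ∈ J₂ := by
    intro a x y ha
    have hx := hsum x trivial
    have hy := hsum y trivial
    have hxy := hsum (x * y) trivial
    have : a = φ₂ y * φ₂ x - (φ₁ x * φ₂ y + φ₂ x * φ₁ y + φ₂ x * φ₂ y) := by
      apply Subtype.ext
      push_cast
      rw [ha, hxy, hx, hy]
      have := congrArg (fun z : rngGen φ => (z : R')) (hm1 x trivial y trivial)
      have h2' := congrArg (fun z : rngGen φ => (z : R')) (hm2 x trivial y trivial)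
      push_cast at this h2'
      rw [this, h2']
      noncomm_ring
    rw [this]
    exact J₂.sub_mem (J₂.mul_mem_right _ _ (h2 y))
      (J₂.add_mem (J₂.add_mem (J₂.mul_mem_left _ _ (h2 y)) (J₂.mul_mem_right _ _ (h2 x)))
        (J₂.mul_mem_right _ _ (h2 x)))
  have key' : ∀ (a : rngGen φ) (x y : R), (a : R') = φ (x * y) - φ y * φ x → a ∈ J₁ := by
    intro a x y ha
    have hx := hsum x trivial
    have hy := hsum y trivial
    have hxy := hsum (x * y) trivial
    have : a = φ₁ x * φ₁ y - (φ₁ y * φ₁ x + φ₁ y * φ₂ x + φ₂ y * φ₁ x) := by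
      apply Subtype.ext
      push_cast
      rw [ha, hxy, hx, hy]
      have h1' := congrArg (fun z : rngGen φ => (z : R')) (hm1 x trivial y trivial)
      have h2' := congrArg (fun z : rngGen φ => (z : R')) (hm2 x trivial y trivial)
      push_cast at h1' h2'
      rw [h1', h2']
      noncomm_ring
    rw [this]
    exact J₁.sub_mem (J₁.mul_mem_right _ _ (h1 x))
      (J₁.add_mem (J₁.add_mem (J₁.mul_mem_right _ _ (h1 y)) (J₁.mul_mem_right _ _ (h1 y)))
        (J₁.mul_mem_left _ _ (h1 x)))
  have hV : Vphi φ ≤ J₂ := by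
    intro a ha
    rw [Vphi, TwoSidedIdeal.mem_span_iff] at ha
    exact ha J₂ (fun b hb => by obtain ⟨x, y, hb⟩ := hb; exact key b x y hb)
  have hW : Wphi φ ≤ J₁ := by
    intro a ha
    rw [Wphi, TwoSidedIdeal.mem_span_iff] at ha
    exact ha J₁ (fun b hb => by obtain ⟨x, y, hb⟩ := hb; exact key' b x y hb)
  rw [Splittable, ← le_bot_iff, ← hJ]
  exact le_inf (inf_le_of_right_le hW) (inf_le_of_left_le hV)
end

section
/- If R' is a 2-torsion free semiprime ring, then every surjective Jordan homomorphism φ : R → R' is splittable, i.e., V_φ ∩ W_φ = {0}. -/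
/-- A ring is semiprime if `I² = {0}` implies `I = {0}` for every (two-sided) ideal `I`. -/
def IsSemiprimeRing (A : Type*) [NonUnitalRing A] : Prop :=
  ∀ I : TwoSidedIdeal A, (∀ x ∈ I, ∀ y ∈ I, x * y = 0) → I = ⊥


section BresarAux

variable {A : Type*} [NonUnitalRing A]

private lemma sp_elem_sq (hsp : IsSemiprimeRing A) (c : A)
    (hsq : c * c = 0) (h : ∀ r : A, c * r * c = 0) : c = 0 := by
  set I : TwoSidedIdeal A := TwoSidedIdeal.span {c} with hIdef
  have hcI : c ∈ I := TwoSidedIdeal.subset_span (by simp)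
  have step1 : ∀ x ∈ I, c * x = 0 ∧ ∀ r : A, c * (r * x) = 0 := by
    intro x hx
    obtain ⟨J, hJmem⟩ : ∃ J : TwoSidedIdeal A,
        ∀ t : A, t ∈ J ↔ (c * t = 0 ∧ ∀ r : A, c * (r * t) = 0) :=
      ⟨TwoSidedIdeal.mk' {y : A | c * y = 0 ∧ ∀ r : A, c * (r * y) = 0}
        ⟨mul_zero c, fun r => by rw [mul_zero, mul_zero]⟩
        (fun {y z} hy hz => ⟨by rw [mul_add, hy.1, hz.1, add_zero],
          fun r => by rw [mul_add, mul_add, hy.2 r, hz.2 r, add_zero]⟩)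
        (fun {y} hy => ⟨by rw [mul_neg, hy.1, neg_zero],
          fun r => by rw [mul_neg, mul_neg, hy.2 r, neg_zero]⟩)
        (fun {x0 y0} hy => ⟨hy.2 x0,
          fun r => by rw [show r * (x0 * y0) = (r * x0) * y0 by rw [mul_assoc]]; exact hy.2 (r * x0)⟩)
        (fun {x0 y0} hx0 => ⟨by rw [← mul_assoc, hx0.1, zero_mul],
          fun r => by
            rw [show r * (x0 * y0) = (r * x0) * y0 by rw [mul_assoc], ← mul_assoc, hx0.2 r, zero_mul]⟩),
        fun t => TwoSidedIdeal.mem_mk' _ _ _ _ _ _ t⟩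
    refine (hJmem x).1 ((TwoSidedIdeal.mem_span_iff).1 hx J ?_)
    intro t ht
    simp only [Set.mem_singleton_iff] at ht
    subst ht
    rw [SetLike.mem_coe, hJmem]
    exact ⟨hsq, fun r => by rw [← mul_assoc]; exact h r⟩
  have step2 : ∀ x ∈ I, ∀ y ∈ I, x * y = 0 := by
    intro x hx
    obtain ⟨K, hKmem⟩ : ∃ K : TwoSidedIdeal A, ∀ t : A, t ∈ K ↔ (∀ y ∈ I, t * y = 0) :=
      ⟨TwoSidedIdeal.mk' {g : A | ∀ y ∈ I, g * y = 0}
        (fun y _ => zero_mul y)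
        (fun {g1 g2} h1 h2 => fun y hy => by rw [add_mul, h1 y hy, h2 y hy, add_zero])
        (fun {g} h1 => fun y hy => by rw [neg_mul, h1 y hy, neg_zero])
        (fun {x0 y0} hy0 => fun y hy => by rw [mul_assoc, hy0 y hy, mul_zero])
        (fun {x0 y0} hx0 => fun y hy => by
          rw [mul_assoc]; exact hx0 (y0 * y) (TwoSidedIdeal.mul_mem_left I y0 y hy)),
        fun t => TwoSidedIdeal.mem_mk' _ _ _ _ _ _ t⟩
    refine (hKmem x).1 ((TwoSidedIdeal.mem_span_iff).1 hx K ?_)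
    intro t ht
    simp only [Set.mem_singleton_iff] at ht
    subst ht
    rw [SetLike.mem_coe, hKmem]
    exact fun y hy => (step1 y hy).1
  have : I = ⊥ := hsp I step2
  rw [this, TwoSidedIdeal.mem_bot] at hcI
  exact hcI

private lemma sp_elem (hsp : IsSemiprimeRing A) (c : A)
    (h : ∀ r : A, c * r * c = 0) : c = 0 := by
  have hd : c * c = 0 := by
    apply sp_elem_sq hsp _ ?_ ?_
    · have := h (c * c)
      linear_combination (norm := noncomm_ring) this
    · intro r
      have h2 : c * c * r * (c * c) = c * (c * r * c) * c := by noncomm_ring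
      rw [h2, h r, mul_zero, zero_mul]
  exact sp_elem_sq hsp c hd h

private lemma bresar_lemma (htf : ∀ a : A, a + a = 0 → a = 0) (hsp : IsSemiprimeRing A)
    (a b : A) (H : ∀ x : A, a * x * b + b * x * a = 0) (z : A) : a * z * b = 0 := by
  apply sp_elem hsp
  intro w
  apply htf
  have r1 : (a*z*b + b*z*a) * (w*(a*z*b)) = 0 := by rw [H z]; exact zero_mul _
  have r2 : (a*(z*a*w)*b + b*(z*a*w)*a) * (z*b) = 0 := by rw [H (z*a*w)]; exact zero_mul _
  have r3 : a*z*((a*w*b + b*w*a)*(z*b)) = 0 := by rw [H w]; simp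
  linear_combination (norm := noncomm_ring) r1 - r2 + r3

end BresarAux

section JordanAux

variable {R R' : Type*} [NonUnitalRing R] [NonUnitalRing R'] (φ : R → R')

private def fA (x y : R) : R' := φ (x * y) - φ x * φ y
private def fB (x y : R) : R' := φ (x * y) - φ y * φ x

variable {φ}

private lemma j2 (hφ : IsJordanHom φ) (x y : R) :
    φ (x*y) + φ (y*x) = φ x * φ y + φ y * φ x := by
  obtain ⟨ha, hs, _⟩ := hφ
  have e := hs (x + y)
  rw [show (x+y)*(x+y) = x*x + (x*y + (y*x + y*y)) by noncomm_ring] at e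
  simp only [ha] at e
  rw [hs x, hs y] at e
  linear_combination (norm := noncomm_ring) e

private lemma j3 (hφ : IsJordanHom φ) (x y z : R) :
    φ (x*y*z) + φ (z*y*x) = φ x * φ y * φ z + φ z * φ y * φ x := by
  obtain ⟨ha, _, ht⟩ := hφ
  have e := ht (x + z) y
  rw [show (x+z)*y*(x+z) = x*y*x + (x*y*z + (z*y*x + z*y*z)) by noncomm_ring] at e
  simp only [ha] at e
  rw [ht x y, ht z y] at e
  linear_combination (norm := noncomm_ring) e

private lemma lemA (hφ : IsJordanHom φ) (x y : R) : fA φ x y * fB φ x y = 0 := by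
  obtain ⟨ha, hs, ht⟩ := hφ
  have e := j3 ⟨ha, hs, ht⟩ x y (x*y)
  rw [show x*y*(x*y) = (x*y)*(x*y) by noncomm_ring,
      show (x*y)*y*x = x*(y*y)*x by noncomm_ring,
      hs (x*y), ht x (y*y), hs y] at e
  show (φ (x*y) - φ x * φ y) * (φ (x*y) - φ y * φ x) = 0
  linear_combination (norm := noncomm_ring) e

private lemma lemBsym (hφ : IsJordanHom φ) (x y z : R) :
    fA φ x y * φ z * fB φ x y + fB φ x y * φ z * fA φ x y = 0 := by
  obtain ⟨ha, hs, ht⟩ := hφ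
  have e := j3 ⟨ha, hs, ht⟩ (x*y) z (y*x)
  rw [show (x*y)*z*(y*x) = x*(y*z*y)*x by noncomm_ring,
      show (y*x)*z*(x*y) = y*(x*z*x)*y by noncomm_ring,
      ht x (y*z*y), ht y (x*z*x), ht y z, ht x z] at e
  have e2 := j2 ⟨ha, hs, ht⟩ x y
  have hq : φ (y*x) = φ x * φ y + φ y * φ x - φ (x*y) := by
    linear_combination (norm := noncomm_ring) e2
  rw [hq] at e
  show (φ (x*y) - φ x * φ y) * φ z * (φ (x*y) - φ y * φ x)
      + (φ (x*y) - φ y * φ x) * φ z * (φ (x*y) - φ x * φ y) = 0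
  linear_combination (norm := noncomm_ring) e

variable (hφ : IsJordanHom φ) (hsurj : Function.Surjective φ)
  (htf : ∀ a : R', a + a = 0 → a = 0) (hsp : IsSemiprimeRing R')

include hφ hsurj htf hsp

private lemma lemM (x y : R) (r : R') : fA φ x y * r * fB φ x y = 0 := by
  apply bresar_lemma htf hsp
  intro s
  obtain ⟨zz, rfl⟩ := hsurj s
  exact lemBsym hφ x y zz

private lemma lemM' (x y : R) (r : R') : fB φ x y * r * fA φ x y = 0 := by
  obtain ⟨zz, rfl⟩ := hsurj r
  have h1 := lemBsym hφ x y zz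
  have h2 := lemM hφ hsurj htf hsp x y (φ zz)
  linear_combination (norm := noncomm_ring) h1 - h2

omit htf hsp hsurj in
private lemma fA_addl (x u y : R) : fA φ (x+u) y = fA φ x y + fA φ u y := by
  obtain ⟨ha, _, _⟩ := hφ
  show φ ((x+u)*y) - φ (x+u) * φ y = (φ (x*y) - φ x * φ y) + (φ (u*y) - φ u * φ y)
  rw [show (x+u)*y = x*y + u*y by noncomm_ring, ha, ha]
  noncomm_ring

omit htf hsp hsurj in
private lemma fA_addr (x y v : R) : fA φ x (y+v) = fA φ x y + fA φ x v := by
  obtain ⟨ha, _, _⟩ := hφ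
  show φ (x*(y+v)) - φ x * φ (y+v) = (φ (x*y) - φ x * φ y) + (φ (x*v) - φ x * φ v)
  rw [show x*(y+v) = x*y + x*v by noncomm_ring, ha, ha]
  noncomm_ring

omit htf hsp hsurj in
private lemma fB_addl (x u y : R) : fB φ (x+u) y = fB φ x y + fB φ u y := by
  obtain ⟨ha, _, _⟩ := hφ
  show φ ((x+u)*y) - φ y * φ (x+u) = (φ (x*y) - φ y * φ x) + (φ (u*y) - φ y * φ u)
  rw [show (x+u)*y = x*y + u*y by noncomm_ring, ha, ha]
  noncomm_ring

omit htf hsp hsurj in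
private lemma fB_addr (x y v : R) : fB φ x (y+v) = fB φ x y + fB φ x v := by
  obtain ⟨ha, _, _⟩ := hφ
  show φ (x*(y+v)) - φ (y+v) * φ x = (φ (x*y) - φ y * φ x) + (φ (x*v) - φ v * φ x)
  rw [show x*(y+v) = x*y + x*v by noncomm_ring, ha, ha]
  noncomm_ring

private lemma linM (x u y : R) (r : R') :
    fA φ x y * r * fB φ u y + fA φ u y * r * fB φ x y = 0 := by
  have h := lemM hφ hsurj htf hsp (x+u) y r
  rw [fA_addl hφ, fB_addl hφ] at h
  have h1 := lemM hφ hsurj htf hsp x y r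
  have h2 := lemM hφ hsurj htf hsp u y r
  linear_combination (norm := noncomm_ring) h - h1 - h2

private lemma linM' (x u y : R) (r : R') :
    fB φ u y * r * fA φ x y + fB φ x y * r * fA φ u y = 0 := by
  have h := lemM' hφ hsurj htf hsp (x+u) y r
  rw [fA_addl hφ, fB_addl hφ] at h
  have h1 := lemM' hφ hsurj htf hsp x y r
  have h2 := lemM' hφ hsurj htf hsp u y r
  linear_combination (norm := noncomm_ring) h - h1 - h2

private lemma stage1 (x u y : R) (r : R') : fA φ x y * r * fB φ u y = 0 := by
  apply sp_elem hsp
  intro w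
  have hm : fB φ u y * w * fA φ x y = -(fB φ x y * w * fA φ u y) := by
    have := linM' hφ hsurj htf hsp x u y w
    linear_combination (norm := noncomm_ring) this
  have key : fA φ x y * r * fB φ u y * w * (fA φ x y * r * fB φ u y)
      = fA φ x y * r * (fB φ u y * w * fA φ x y) * (r * fB φ u y) := by noncomm_ring
  have key2 : fA φ x y * r * -(fB φ x y * w * fA φ u y) * (r * fB φ u y)
      = -((fA φ x y * r * fB φ x y) * (w * (fA φ u y * r * fB φ u y))) := by noncomm_ring
  rw [key, hm, key2, lemM hφ hsurj htf hsp x y r, zero_mul, neg_zero]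

private lemma stage1b (x u y : R) (r : R') : fB φ x y * r * fA φ u y = 0 := by
  apply sp_elem hsp
  intro w
  have hm : fA φ u y * w * fB φ x y = -(fA φ x y * w * fB φ u y) := by
    have := linM hφ hsurj htf hsp x u y w
    linear_combination (norm := noncomm_ring) this
  have key : fB φ x y * r * fA φ u y * w * (fB φ x y * r * fA φ u y)
      = fB φ x y * r * (fA φ u y * w * fB φ x y) * (r * fA φ u y) := by noncomm_ring
  have key2 : fB φ x y * r * -(fA φ x y * w * fB φ u y) * (r * fA φ u y)
      = -((fB φ x y * r * fA φ x y) * (w * (fB φ u y * r * fA φ u y))) := by noncomm_ring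
  rw [key, hm, key2, lemM' hφ hsurj htf hsp x y r, zero_mul, neg_zero]

private lemma stage1bare (x u y : R) : fA φ x y * fB φ u y = 0 := by
  apply sp_elem hsp
  intro w
  have hm : fB φ u y * w * fA φ x y = -(fB φ x y * w * fA φ u y) := by
    have := linM' hφ hsurj htf hsp x u y w
    linear_combination (norm := noncomm_ring) this
  have key : fA φ x y * fB φ u y * w * (fA φ x y * fB φ u y)
      = fA φ x y * (fB φ u y * w * fA φ x y) * fB φ u y := by noncomm_ring
  have key2 : fA φ x y * -(fB φ x y * w * fA φ u y) * fB φ u y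
      = -((fA φ x y * fB φ x y) * (w * (fA φ u y * fB φ u y))) := by noncomm_ring
  rw [key, hm, key2, lemA hφ x y, zero_mul, neg_zero]

private lemma linS1b (x u y v : R) (w : R') :
    fB φ u y * w * fA φ x v + fB φ u v * w * fA φ x y = 0 := by
  have h := stage1b hφ hsurj htf hsp u x (y+v) w
  rw [fB_addr hφ, fA_addr hφ] at h
  have h1 := stage1b hφ hsurj htf hsp u x y w
  have h2 := stage1b hφ hsurj htf hsp u x v w
  linear_combination (norm := noncomm_ring) h - h1 - h2

private lemma stage2 (x y u v : R) (r : R') : fA φ x y * r * fB φ u v = 0 := by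
  apply sp_elem hsp
  intro w
  have hm : fB φ u v * w * fA φ x y = -(fB φ u y * w * fA φ x v) := by
    have := linS1b hφ hsurj htf hsp x u y v w
    linear_combination (norm := noncomm_ring) this
  have key : fA φ x y * r * fB φ u v * w * (fA φ x y * r * fB φ u v)
      = fA φ x y * r * (fB φ u v * w * fA φ x y) * (r * fB φ u v) := by noncomm_ring
  have key2 : fA φ x y * r * -(fB φ u y * w * fA φ x v) * (r * fB φ u v)
      = -((fA φ x y * r * fB φ u y) * (w * (fA φ x v * r * fB φ u v))) := by noncomm_ring
  rw [key, hm, key2, stage1 hφ hsurj htf hsp x u y r, zero_mul, neg_zero]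

private lemma stage2bare (x y u v : R) : fA φ x y * fB φ u v = 0 := by
  apply sp_elem hsp
  intro w
  have hm : fB φ u v * w * fA φ x y = -(fB φ u y * w * fA φ x v) := by
    have := linS1b hφ hsurj htf hsp x u y v w
    linear_combination (norm := noncomm_ring) this
  have key : fA φ x y * fB φ u v * w * (fA φ x y * fB φ u v)
      = fA φ x y * (fB φ u v * w * fA φ x y) * fB φ u v := by noncomm_ring
  have key2 : fA φ x y * -(fB φ u y * w * fA φ x v) * fB φ u v
      = -((fA φ x y * fB φ u y) * (w * (fA φ x v * fB φ u v))) := by noncomm_ring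
  rw [key, hm, key2, stage1bare hφ hsurj htf hsp x u y, zero_mul, neg_zero]

end JordanAux

/-- If `R'` is a 2-torsion free semiprime ring, then every surjective Jordan
homomorphism `φ : R → R'` is splittable. -/
theorem splittable_of_surjective_semiprime {R R' : Type*} [NonUnitalRing R] [NonUnitalRing R']
    (φ : R → R') (hφ : IsJordanHom φ) (hsurj : Function.Surjective φ)
    (htf : ∀ a : R', a + a = 0 → a = 0) (hsp : IsSemiprimeRing R') :
    Splittable φ := by
  have hmemS : ∀ r : R', r ∈ rngGen φ := fun r => by
    obtain ⟨t, rfl⟩ := hsurj r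
    exact NonUnitalSubring.subset_closure ⟨t, rfl⟩
  have genA : ∀ a : ↥(rngGen φ), (∃ x y : R, (a : R') = φ (x*y) - φ x * φ y) →
      ∀ b ∈ Wphi φ, a * b = 0 ∧ ∀ r : ↥(rngGen φ), a * r * b = 0 := by
    rintro a ⟨x, y, ha⟩ b hb
    obtain ⟨L, hLmem⟩ : ∃ L : TwoSidedIdeal ↥(rngGen φ),
        ∀ t, t ∈ L ↔ (a * t = 0 ∧ ∀ r : ↥(rngGen φ), a * r * t = 0) :=
      ⟨TwoSidedIdeal.mk'
        {b' : ↥(rngGen φ) | a * b' = 0 ∧ ∀ r : ↥(rngGen φ), a * r * b' = 0}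
        ⟨mul_zero a, fun r => mul_zero _⟩
        (fun {b1 b2} h1 h2 => ⟨by rw [mul_add, h1.1, h2.1, add_zero],
          fun r => by rw [mul_add, h1.2 r, h2.2 r, add_zero]⟩)
        (fun {b1} h1 => ⟨by rw [mul_neg, h1.1, neg_zero],
          fun r => by rw [mul_neg, h1.2 r, neg_zero]⟩)
        (fun {r0 b'} h1 => ⟨by rw [← mul_assoc]; exact h1.2 r0,
          fun r => by
            rw [show a * r * (r0 * b') = a * (r * r0) * b' by noncomm_ring]
            exact h1.2 (r * r0)⟩)
        (fun {b' r0} h1 => ⟨by rw [← mul_assoc, h1.1, zero_mul],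
          fun r => by
            rw [show a * r * (b' * r0) = (a * r * b') * r0 by noncomm_ring, h1.2 r, zero_mul]⟩)
      , fun t => TwoSidedIdeal.mem_mk' _ _ _ _ _ _ t⟩
    refine (hLmem b).1 ((TwoSidedIdeal.mem_span_iff).1 hb L ?_)
    rintro b' ⟨u, v, hbuv⟩
    rw [SetLike.mem_coe, hLmem]
    constructor
    · apply Subtype.ext
      show (a : R') * (b' : R') = (0 : R')
      rw [ha, hbuv]
      exact stage2bare hφ hsurj htf hsp x y u v
    · intro r
      apply Subtype.ext
      show (a : R') * (r : R') * (b' : R') = (0 : R')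
      rw [ha, hbuv]
      exact stage2 hφ hsurj htf hsp x y u v (r : R')
  have hVW : ∀ v ∈ Vphi φ, ∀ w ∈ Wphi φ, v * w = 0 := by
    intro v hv
    obtain ⟨K, hKmem⟩ : ∃ K : TwoSidedIdeal ↥(rngGen φ),
        ∀ t, t ∈ K ↔ (∀ b ∈ Wphi φ, t * b = 0 ∧ ∀ r : ↥(rngGen φ), t * r * b = 0) :=
      ⟨TwoSidedIdeal.mk'
        {g : ↥(rngGen φ) | ∀ b ∈ Wphi φ, g * b = 0 ∧ ∀ r : ↥(rngGen φ), g * r * b = 0}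
        (fun b _ => ⟨zero_mul b, fun r => by rw [zero_mul, zero_mul]⟩)
        (fun {g1 g2} h1 h2 => fun b hb => ⟨by rw [add_mul, (h1 b hb).1, (h2 b hb).1, add_zero],
          fun r => by
            rw [show (g1+g2)*r*b = g1*r*b + g2*r*b by noncomm_ring,
              (h1 b hb).2 r, (h2 b hb).2 r, add_zero]⟩)
        (fun {g} h1 => fun b hb => ⟨by rw [neg_mul, (h1 b hb).1, neg_zero],
          fun r => by
            rw [show (-g)*r*b = -(g*r*b) by noncomm_ring, (h1 b hb).2 r, neg_zero]⟩)
        (fun {x0 y0} hy0 => fun b hb => ⟨by rw [mul_assoc, (hy0 b hb).1, mul_zero],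
          fun r => by
            rw [show x0*y0*r*b = x0*(y0*r*b) by noncomm_ring, (hy0 b hb).2 r, mul_zero]⟩)
        (fun {x0 y0} hx0 => fun b hb => ⟨by
            rw [mul_assoc]
            exact (hx0 (y0*b) (TwoSidedIdeal.mul_mem_left _ y0 b hb)).1,
          fun r => by
            rw [show x0*y0*r*b = x0*(y0*r)*b by noncomm_ring]
            exact (hx0 b hb).2 (y0*r)⟩)
      , fun t => TwoSidedIdeal.mem_mk' _ _ _ _ _ _ t⟩
    have hvK : v ∈ K := (TwoSidedIdeal.mem_span_iff).1 hv K (by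
      rintro a ⟨x, y, ha⟩
      rw [SetLike.mem_coe, hKmem]
      exact genA a ⟨x, y, ha⟩)
    exact fun w hw => ((hKmem v).1 hvK w hw).1
  show Vphi φ ⊓ Wphi φ = ⊥
  rw [eq_bot_iff]
  intro z hz
  rw [TwoSidedIdeal.mem_inf] at hz
  rw [TwoSidedIdeal.mem_bot]
  have hcz : (z : R') = 0 := by
    apply sp_elem hsp
    intro r
    have h1 : z * (⟨r, hmemS r⟩ : ↥(rngGen φ)) ∈ Vphi φ :=
      (Vphi φ).mul_mem_right _ _ hz.1
    have h2 := hVW _ h1 z hz.2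
    exact congrArg Subtype.val h2
  exact Subtype.ext hcz
end

section
/- If R' is a reduced ring, then every Jordan homomorphism φ : R → R' is splittable, i.e., V_φ ∩ W_φ = {0}. -/
section JordanAux
variable {R R' : Type*} [NonUnitalRing R] [NonUnitalRing R']

private lemma red_swap (hred : ∀ a : R', a * a = 0 → a = 0) {a b : R'} (h : a * b = 0) :
    b * a = 0 := by
  apply hred
  calc b * a * (b * a) = b * (a * b) * a := by noncomm_ring
    _ = 0 := by rw [h]; noncomm_ring

private lemma red_mid (hred : ∀ a : R', a * a = 0 → a = 0) {a b : R'} (h : a * b = 0)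
    (r : R') : a * r * b = 0 := by
  apply hred
  have h' : b * a = 0 := red_swap hred h
  calc a * r * b * (a * r * b) = a * r * (b * a) * r * b := by noncomm_ring
    _ = 0 := by rw [h']; noncomm_ring

private lemma red_cancel (hred : ∀ a : R', a * a = 0 → a = 0) {A B C D : R'}
    (hAD : A * D = 0) (hCB : C * B = 0)
    (hsum : (A + C) * (D + B) = 0) : A * B = 0 := by
  have hBC : B * C = 0 := red_swap hred hCB
  have hAB : A * B = -(C * D) := by
    have h : A * D + A * B + C * D + C * B = 0 := by rw [← hsum]; noncomm_ring
    rw [hAD, hCB] at h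
    simp only [zero_add, add_zero] at h
    exact eq_neg_of_add_eq_zero_left h
  apply hred
  calc A * B * (A * B) = A * B * -(C * D) := by rw [← hAB]
    _ = -(A * (B * C) * D) := by noncomm_ring
    _ = 0 := by rw [hBC]; noncomm_ring

variable {φ : R → R'}
variable (hadd : ∀ x y : R, φ (x + y) = φ x + φ y)
variable (hsq : ∀ x : R, φ (x * x) = φ x * φ x)
variable (htr : ∀ x y : R, φ (x * y * x) = φ x * φ y * φ x)
include hadd hsq htr

set_option linter.unusedSectionVars false

private lemma jh_tr_lin (x y z : R) :
    φ (x * y * z) + φ (z * y * x) = φ x * φ y * φ z + φ z * φ y * φ x := by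
  have h := htr (x + z) y
  rw [show (x+z)*y*(x+z) = x*y*x + (x*y*z + (z*y*x + z*y*z)) by noncomm_ring,
    hadd, hadd, hadd, hadd x z] at h
  have key : φ (x*y*z) + φ (z*y*x)
      = ((φ x + φ z) * φ y * (φ x + φ z)) - φ (x*y*x) - φ (z*y*z) := by rw [← h]; abel
  rw [htr, htr] at key
  rw [key]; noncomm_ring

/-- The Herstein identity: `{x,y}⟨x,y⟩ = 0`. -/
private lemma jh_diag (x y : R) :
    (φ (x * y) - φ x * φ y) * (φ (x * y) - φ y * φ x) = 0 := by
  have h := jh_tr_lin hadd hsq htr x y (x * y)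
  rw [show x * y * (x*y) = (x*y) * (x*y) by noncomm_ring,
    show (x*y) * y * x = x * (y*y) * x by noncomm_ring,
    hsq (x*y), htr x (y*y), hsq y] at h
  set a := φ (x*y)
  have key : (a - φ x * φ y) * (a - φ y * φ x)
      = (a * a + φ x * (φ y * φ y) * φ x)
        - (φ x * φ y * a + a * (φ y * φ x)) := by noncomm_ring
  rw [key, h]; noncomm_ring

private lemma jh_mixed1 (hred : ∀ a : R', a * a = 0 → a = 0) (x u y : R) :
    (φ (x * y) - φ x * φ y) * (φ (u * y) - φ y * φ u) = 0 := by
  refine red_cancel hred (C := φ (u*y) - φ u * φ y) (D := φ (x*y) - φ y * φ x)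
    (jh_diag hadd hsq htr x y) (jh_diag hadd hsq htr u y) ?_
  have h := jh_diag hadd hsq htr (x + u) y
  rw [show (x+u)*y = x*y + u*y by noncomm_ring, hadd, hadd x u] at h
  rw [show φ (x*y) - φ x * φ y + (φ (u*y) - φ u * φ y)
      = φ (x*y) + φ (u*y) - (φ x + φ u) * φ y by noncomm_ring,
    show φ (x*y) - φ y * φ x + (φ (u*y) - φ y * φ u)
      = φ (x*y) + φ (u*y) - φ y * (φ x + φ u) by noncomm_ring]
  exact h

private lemma jh_mixed (hred : ∀ a : R', a * a = 0 → a = 0) (x y u v : R) :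
    (φ (x * y) - φ x * φ y) * (φ (u * v) - φ v * φ u) = 0 := by
  refine red_cancel hred (C := φ (x*v) - φ x * φ v) (D := φ (u*y) - φ y * φ u)
    (jh_mixed1 hadd hsq htr hred x u y) (jh_mixed1 hadd hsq htr hred x u v) ?_
  have h := jh_mixed1 hadd hsq htr hred x u (y + v)
  rw [show x*(y+v) = x*y + x*v by noncomm_ring, show u*(y+v) = u*y + u*v by noncomm_ring,
    hadd (x*y) (x*v), hadd (u*y) (u*v), hadd y v] at h
  rw [show φ (x*y) - φ x * φ y + (φ (x*v) - φ x * φ v)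
      = φ (x*y) + φ (x*v) - φ x * (φ y + φ v) by noncomm_ring,
    show φ (u*y) - φ y * φ u + (φ (u*v) - φ v * φ u)
      = φ (u*y) + φ (u*v) - (φ y + φ v) * φ u by noncomm_ring]
  exact h

end JordanAux

/-- If `R'` is a reduced ring (no nonzero nilpotents; for associative rings this is
equivalent to: `x² = 0` implies `x = 0`), then every Jordan homomorphism
`φ : R → R'` is splittable. -/
theorem splittable_of_reduced {R R' : Type*} [NonUnitalRing R] [NonUnitalRing R']
    (hred : ∀ a : R', a * a = 0 → a = 0)
    (φ : R → R') (hφ : IsJordanHom φ) :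
    Splittable φ := by
  obtain ⟨hadd, hsq, htr⟩ := hφ
  -- Step 1: every element of `Vphi φ` annihilates each generator `⟨u,v⟩` of `Wphi φ`.
  have stepV : ∀ a : rngGen φ, a ∈ Vphi φ → ∀ u v : R,
      (a : R') * (φ (u * v) - φ v * φ u) = 0 := by
    intro a ha u v
    set b : R' := φ (u * v) - φ v * φ u with hb
    let I : TwoSidedIdeal (rngGen φ) :=
      TwoSidedIdeal.mk' {c : rngGen φ | (c : R') * b = 0}
        (by simp)
        (fun {c d} hc hd => by
          simp only [Set.mem_setOf_eq] at hc hd ⊢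
          push_cast
          rw [add_mul, hc, hd, add_zero])
        (fun {c} hc => by
          simp only [Set.mem_setOf_eq] at hc ⊢
          push_cast
          rw [neg_mul, hc, neg_zero])
        (fun {c d} hd => by
          simp only [Set.mem_setOf_eq] at hd ⊢
          push_cast
          rw [mul_assoc, hd, mul_zero])
        (fun {c d} hc => by
          simp only [Set.mem_setOf_eq] at hc ⊢
          push_cast
          exact red_mid hred hc _)
    have hle : Vphi φ ≤ I := by
      intro c hc
      refine TwoSidedIdeal.mem_span_iff.mp hc I ?_
      rintro e ⟨x, y, hxy⟩
      show e ∈ I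
      rw [TwoSidedIdeal.mem_mk']
      show (e : R') * b = 0
      rw [hxy, hb]
      exact jh_mixed hadd hsq htr hred x y u v
    have := hle ha
    rwa [TwoSidedIdeal.mem_mk'] at this
  -- Step 2: every element of `Vphi φ` annihilates every element of `Wphi φ`.
  have stepW : ∀ a : rngGen φ, a ∈ Vphi φ → ∀ c : rngGen φ, c ∈ Wphi φ →
      (a : R') * (c : R') = 0 := by
    intro a ha
    let J : TwoSidedIdeal (rngGen φ) :=
      TwoSidedIdeal.mk' {c : rngGen φ | (a : R') * (c : R') = 0}
        (by simp)
        (fun {c d} hc hd => by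
          simp only [Set.mem_setOf_eq] at hc hd ⊢
          push_cast
          rw [mul_add, hc, hd, add_zero])
        (fun {c} hc => by
          simp only [Set.mem_setOf_eq] at hc ⊢
          push_cast
          rw [mul_neg, hc, neg_zero])
        (fun {c d} hd => by
          simp only [Set.mem_setOf_eq] at hd ⊢
          push_cast
          rw [← mul_assoc]
          exact red_mid hred hd _)
        (fun {c d} hc => by
          simp only [Set.mem_setOf_eq] at hc ⊢
          push_cast
          rw [← mul_assoc, hc, zero_mul])
    have hle : Wphi φ ≤ J := by
      intro c hc
      refine TwoSidedIdeal.mem_span_iff.mp hc J ?_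
      rintro e ⟨u, v, huv⟩
      show e ∈ J
      rw [TwoSidedIdeal.mem_mk']
      show (a : R') * (e : R') = 0
      rw [huv]
      exact stepV a ha u v
    intro c hc
    have := hle hc
    rwa [TwoSidedIdeal.mem_mk'] at this
  -- Conclusion
  rw [Splittable, eq_bot_iff]
  intro c hc
  rw [TwoSidedIdeal.mem_inf] at hc
  rw [TwoSidedIdeal.mem_bot]
  have h0 : (c : R') * (c : R') = 0 := stepW c hc.1 c hc.2
  exact Subtype.ext (hred _ h0)
end

section
/- Let S be a unital ring, n ≥ 2, and R = Mₙ(S) the ring of n×n matrices over S. Then every Jordan homomorphism φ : R → R' into any ring R' is the sum of a homomorphism and an antihomomorphism on the whole ring R (taking I = R in the definition); in particular, φ is splittable. -/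
/-!
Let `eᵢ = φ(Eᵢᵢ)`. These are orthogonal idempotents, and for `u` in a Peirce corner `Eᵢᵢ M Eⱼⱼ`
with `i ≠ j` the Jordan identities give `φ u = eᵢ (φ u) eⱼ + eⱼ (φ u) eᵢ`, where the first
component multiplies like `u` and the second like `u` in reverse. With `xᵢⱼ = eᵢ φ(Eᵢⱼ) eⱼ`, the
idempotent `pᵢ = xᵢⱼ xⱼᵢ` does not depend on `j ≠ i`, and `P = ∑ᵢ pᵢ` commutes with `φ(R)`. One
checks on pairs of Peirce corners that `x ↦ φ(x) P` is multiplicative. The same construction for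
`op ∘ φ : R → R'ᵐᵒᵖ` gives `φ 1 - P`, because `eᵢ = pᵢ + qᵢ` with `qᵢ = yⱼᵢ yᵢⱼ` and
`yᵢⱼ = eⱼ φ(Eᵢⱼ) eᵢ`. So `x ↦ φ(x) (φ 1 - P)` is antimultiplicative. The ideals
`{w | w P = w} ⊇ W_φ` and `{w | w P = 0} ⊇ V_φ` of `R'_φ` separate the two parts.
-/

open MulOpposite Matrix

namespace IsJordanHom

variable {R R' : Type*} [NonUnitalRing R] [NonUnitalRing R'] {φ : R → R'}

def toAddMonoidHom (hφ : IsJordanHom φ) : R →+ R' := AddMonoidHom.mk' φ hφ.1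

lemma map_add (hφ : IsJordanHom φ) (x y : R) : φ (x + y) = φ x + φ y := hφ.1 x y

lemma map_zero (hφ : IsJordanHom φ) : φ 0 = 0 := hφ.toAddMonoidHom.map_zero

lemma map_sum (hφ : IsJordanHom φ) {α : Type*} (s : Finset α) (f : α → R) :
    φ (∑ a ∈ s, f a) = ∑ a ∈ s, φ (f a) :=
  _root_.map_sum hφ.toAddMonoidHom f s

lemma map_mul_add_mul (hφ : IsJordanHom φ) (x y : R) :
    φ (x * y + y * x) = φ x * φ y + φ y * φ x := by
  have h := hφ.2.1 (x + y)
  rw [show (x + y) * (x + y) = x * x + (x * y + y * x) + y * y by noncomm_ring,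
    hφ.map_add (x * x + _), hφ.map_add (x * x), hφ.2.1 x, hφ.2.1 y, hφ.map_add x y,
    show (φ x + φ y) * (φ x + φ y) = φ x * φ x + (φ x * φ y + φ y * φ x) + φ y * φ y by
      noncomm_ring] at h
  exact add_left_cancel (add_right_cancel h)

lemma map_mul_mul_add_mul_mul (hφ : IsJordanHom φ) (x y z : R) :
    φ (x * z * y + y * z * x) = φ x * φ z * φ y + φ y * φ z * φ x := by
  have h := hφ.2.2 (x + y) z
  rw [show (x + y) * z * (x + y) = x * z * x + (x * z * y + y * z * x) + y * z * y by
      noncomm_ring,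
    hφ.map_add (x * z * x + _), hφ.map_add (x * z * x), hφ.2.2 x, hφ.2.2 y, hφ.map_add x y,
    show (φ x + φ y) * φ z * (φ x + φ y) =
      φ x * φ z * φ x + (φ x * φ z * φ y + φ y * φ z * φ x) + φ y * φ z * φ y by
      noncomm_ring] at h
  exact add_left_cancel (add_right_cancel h)

protected lemma op (hφ : IsJordanHom φ) : IsJordanHom (op ∘ φ) :=
  ⟨fun x y => by simp [hφ.map_add], fun x => by simp [hφ.2.1],
    fun x y => by
    simp only [Function.comp_apply]
    rw [hφ.2.2, ← op_mul, ← op_mul, mul_assoc]⟩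

end IsJordanHom

section Unital

variable {R R' : Type*} [Ring R] [NonUnitalRing R'] {φ : R → R'}

namespace IsJordanHom

lemma map_one_mul (hφ : IsJordanHom φ) (x : R) : φ 1 * φ x = φ x := by
  have hsq : φ 1 * φ 1 = φ 1 := by simpa using (hφ.2.1 1).symm
  have hsand : φ 1 * φ x * φ 1 = φ x := by simpa using (hφ.2.2 1 x).symm
  have hlin : φ x * φ 1 + φ 1 * φ x = φ x + φ x := by
    simpa [hφ.map_add] using (hφ.map_mul_add_mul x 1).symm
  have h := congrArg (φ 1 * ·) hlin
  simp only [mul_add, ← mul_assoc, hsq, hsand] at h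
  exact (add_right_cancel h).symm

lemma map_mul_one (hφ : IsJordanHom φ) (x : R) : φ x * φ 1 = φ x :=
  op_injective (hφ.op.map_one_mul x)

lemma commute_map_one (hφ : IsJordanHom φ) (x : R) : Commute (φ x) (φ 1) :=
  (hφ.map_mul_one x).trans (hφ.map_one_mul x).symm

end IsJordanHom

lemma mul_map_one_of_mem_rngGen (hφ : IsJordanHom φ) {w : R'} (hw : w ∈ rngGen φ) :
    w * φ 1 = w := by
  induction hw using NonUnitalSubring.closure_induction with
  | mem _ hx => obtain ⟨y, rfl⟩ := hx; exact hφ.map_mul_one y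
  | zero => exact zero_mul _
  | add _ _ _ _ hx hy => rw [add_mul, hx, hy]
  | neg _ _ hx => rw [neg_mul, hx]
  | mul _ _ _ _ _ hy => rw [mul_assoc, hy]

end Unital

lemma map_mem_rngGen {R R' : Type*} [NonUnitalRing R] [NonUnitalRing R'] (φ : R → R') (x : R) :
    φ x ∈ rngGen φ :=
  NonUnitalSubring.subset_closure ⟨x, rfl⟩

lemma commute_of_mem_rngGen {R R' : Type*} [NonUnitalRing R] [NonUnitalRing R'] {φ : R → R'}
    {c w : R'} (hc : ∀ x, Commute (φ x) c) (hw : w ∈ rngGen φ) : Commute w c := by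
  have : rngGen φ ≤ NonUnitalSubring.centralizer {c} :=
    NonUnitalSubring.closure_le.2 <| by rintro _ ⟨x, rfl⟩ _ rfl; exact (hc x).symm
  exact (NonUnitalSubring.mem_centralizer_iff.1 (this hw) c rfl).symm

lemma mul_mul_mul_of_commute {T : Type*} [Semigroup T] {a b e : T} (hb : Commute b e)
    (he : e * e = e) : a * e * (b * e) = a * e * b := by
  rw [hb.eq, ← mul_assoc, mul_assoc a, he]

namespace TwoSidedIdeal

variable {T : Type*} [NonUnitalRing T] (c : T) (hc : ∀ w, Commute w c)

def ofMulEqSelf : TwoSidedIdeal T :=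
  .mk' {w | w * c = w} (zero_mul c)
    (fun {x y} (hx : x * c = x) (hy : y * c = y) => show (x + y) * c = x + y by
      rw [add_mul, hx, hy])
    (fun {x} (hx : x * c = x) => show -x * c = -x by rw [neg_mul, hx])
    (fun {x y} (hy : y * c = y) => show x * y * c = x * y by rw [mul_assoc, hy])
    (fun {x y} (hx : x * c = x) => show x * y * c = x * y by
      rw [mul_assoc, (hc y).eq, ← mul_assoc, hx])

def ofMulEqZero : TwoSidedIdeal T :=
  .mk' {w | w * c = 0} (zero_mul c)
    (fun {x y} (hx : x * c = 0) (hy : y * c = 0) => show (x + y) * c = 0 by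
      rw [add_mul, hx, hy, add_zero])
    (fun {x} (hx : x * c = 0) => show -x * c = 0 by rw [neg_mul, hx, neg_zero])
    (fun {x y} (hy : y * c = 0) => show x * y * c = 0 by rw [mul_assoc, hy, mul_zero])
    (fun {x y} (hx : x * c = 0) => show x * y * c = 0 by
      rw [mul_assoc, (hc y).eq, ← mul_assoc, hx, zero_mul])

variable {c hc}

lemma mem_ofMulEqSelf {w : T} : w ∈ ofMulEqSelf c hc ↔ w * c = w := mem_mk' ..

lemma mem_ofMulEqZero {w : T} : w ∈ ofMulEqZero c hc ↔ w * c = 0 := mem_mk' ..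

lemma ofMulEqSelf_inf_ofMulEqZero : ofMulEqSelf c hc ⊓ ofMulEqZero c hc = ⊥ := by
  refine eq_bot_iff.2 fun w hw => ?_
  rw [mem_inf, mem_ofMulEqSelf, mem_ofMulEqZero] at hw
  exact (mem_bot T).2 (hw.1.symm.trans hw.2)

end TwoSidedIdeal

structure IsSplittingIdempotent {R R' : Type*} [Ring R] [NonUnitalRing R'] (φ : R → R')
    (p : R') : Prop where
  mem_rngGen : p ∈ rngGen φ
  commute : ∀ x, Commute (φ x) p
  mul_self : p * p = p
  map_mul_mul : ∀ x y, φ (x * y) * p = φ x * p * (φ y * p)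
  map_mul_mul_sub : ∀ x y, φ (x * y) * (φ 1 - p) = φ y * (φ 1 - p) * (φ x * (φ 1 - p))

namespace IsSplittingIdempotent

variable {R R' : Type*} [Ring R] [NonUnitalRing R'] {φ : R → R'} {p : R'}

lemma commute_rngGen (h : IsSplittingIdempotent φ p) (w : rngGen φ) :
    Commute w ⟨p, h.mem_rngGen⟩ :=
  Subtype.ext (commute_of_mem_rngGen h.commute w.2).eq

lemma commute_sub (hφ : IsJordanHom φ) (h : IsSplittingIdempotent φ p) (x : R) :
    Commute (φ x) (φ 1 - p) :=
  (hφ.commute_map_one x).sub_right (h.commute x)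

lemma sub_mul_self (hφ : IsJordanHom φ) (h : IsSplittingIdempotent φ p) :
    (φ 1 - p) * (φ 1 - p) = φ 1 - p := by
  rw [sub_mul, mul_sub, mul_sub, hφ.map_mul_one, (h.commute 1).eq,
    mul_map_one_of_mem_rngGen hφ h.mem_rngGen, h.mul_self, sub_self, sub_zero]

theorem isSumHomAntihomOn (hφ : IsJordanHom φ) (h : IsSplittingIdempotent φ p) :
    IsSumHomAntihomOn φ ⊤ := by
  have hq := h.sub_mul_self hφ
  refine ⟨fun x => ⟨φ x * p, mul_mem (map_mem_rngGen φ x) h.mem_rngGen⟩,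
    fun x => ⟨φ x * (φ 1 - p),
      mul_mem (map_mem_rngGen φ x) (sub_mem (map_mem_rngGen φ 1) h.mem_rngGen)⟩,
    fun u _ v _ => Subtype.ext (by simp [hφ.map_add, add_mul]),
    fun u _ v _ => Subtype.ext (by simp [hφ.map_add, add_mul]),
    fun u _ v _ => Subtype.ext (h.map_mul_mul u v),
    fun u _ v _ => Subtype.ext (h.map_mul_mul_sub u v),
    fun u _ => by simp [← mul_add, hφ.map_mul_one],
    ⟨.ofMulEqSelf _ h.commute_rngGen, .ofMulEqZero _ h.commute_rngGen, fun u _ => ?_,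
      fun u _ => ?_, TwoSidedIdeal.ofMulEqSelf_inf_ofMulEqZero⟩,
    fun u _ x => ⟨?_, ?_⟩, fun u _ x => ⟨?_, ?_⟩⟩
  · exact TwoSidedIdeal.mem_ofMulEqSelf.2 (Subtype.ext (by simp [mul_assoc, h.mul_self]))
  · refine TwoSidedIdeal.mem_ofMulEqZero.2 (Subtype.ext ?_)
    show φ u * (φ 1 - p) * p = 0
    rw [mul_assoc, sub_mul, h.mul_self, mul_sub, ← mul_assoc, hφ.map_mul_one, sub_self]
  · show φ (u * x) * p = φ u * p * φ x
    rw [h.map_mul_mul, mul_mul_mul_of_commute (h.commute x) h.mul_self]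
  · show φ (x * u) * p = φ x * (φ u * p)
    rw [h.map_mul_mul, mul_mul_mul_of_commute (h.commute u) h.mul_self, mul_assoc,
      (h.commute u).eq]
  · show φ (u * x) * (φ 1 - p) = φ x * (φ u * (φ 1 - p))
    rw [h.map_mul_mul_sub, mul_mul_mul_of_commute (h.commute_sub hφ u) hq, mul_assoc,
      (h.commute_sub hφ u).eq]
  · show φ (x * u) * (φ 1 - p) = φ u * (φ 1 - p) * φ x
    rw [h.map_mul_mul_sub, mul_mul_mul_of_commute (h.commute_sub hφ x) hq]

theorem splittable (hφ : IsJordanHom φ) (h : IsSplittingIdempotent φ p) : Splittable φ := by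
  have hV : Vphi φ ≤ .ofMulEqZero _ h.commute_rngGen := by
    refine TwoSidedIdeal.span_le.2 fun a ⟨x, y, hxy⟩ => TwoSidedIdeal.mem_ofMulEqZero.2 ?_
    refine Subtype.ext ?_
    show (a : R') * p = 0
    rw [hxy, sub_mul, h.map_mul_mul, mul_mul_mul_of_commute (h.commute y) h.mul_self, mul_assoc,
      ← (h.commute y).eq, ← mul_assoc, sub_self]
  have hW : Wphi φ ≤ .ofMulEqSelf _ h.commute_rngGen := by
    refine TwoSidedIdeal.span_le.2 fun a ⟨x, y, hxy⟩ => TwoSidedIdeal.mem_ofMulEqSelf.2 ?_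
    refine Subtype.ext ?_
    show (a : R') * p = a
    have hanti := h.map_mul_mul_sub x y
    rw [mul_mul_mul_of_commute (h.commute_sub hφ x) (h.sub_mul_self hφ), mul_assoc,
      ← (h.commute_sub hφ x).eq, ← mul_assoc, ← sub_eq_zero, ← sub_mul, ← hxy, mul_sub,
      sub_eq_zero] at hanti
    rw [← hanti, hxy, sub_mul, hφ.map_mul_one, mul_assoc, hφ.map_mul_one]
  refine eq_bot_iff.2 ((inf_le_inf hV hW).trans_eq ?_)
  rw [inf_comm]
  exact TwoSidedIdeal.ofMulEqSelf_inf_ofMulEqZero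

end IsSplittingIdempotent

def InCorner {T : Type*} [Mul T] (a b w : T) : Prop := a * w = w ∧ w * b = w

namespace InCorner

variable {T : Type*}

section Semigroup

variable [Semigroup T] {a b c w v : T}

lemma mul (hw : InCorner a b w) (hv : InCorner b c v) : InCorner a c (w * v) :=
  ⟨by rw [← mul_assoc, hw.1], by rw [mul_assoc, hv.2]⟩

lemma mul_mul_eq (hw : InCorner a b w) : a * w * b = w := by rw [hw.1, hw.2]

lemma of_idempotent (ha : a * a = a) (hb : b * b = b) (x : T) : InCorner a b (a * x * b) :=
  ⟨by rw [← mul_assoc, ← mul_assoc, ha], by rw [mul_assoc _ b, hb]⟩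

end Semigroup

variable [SemigroupWithZero T] {a b c d w v : T}

lemma mul_eq_zero_of_left (hw : InCorner a b w) (h : c * a = 0) : c * w = 0 := by
  rw [← hw.1, ← mul_assoc, h, zero_mul]

lemma mul_eq_zero_of_right (hw : InCorner a b w) (h : b * c = 0) : w * c = 0 := by
  rw [← hw.2, mul_assoc, h, mul_zero]

lemma mul_eq_zero (hw : InCorner a b w) (hv : InCorner c d v) (h : b * c = 0) : w * v = 0 :=
  hv.mul_eq_zero_of_left (hw.mul_eq_zero_of_right h)

end InCorner

namespace Matrix

variable {ι S : Type*} [Fintype ι] [DecidableEq ι] [Ring S]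

lemma inCorner_single (i j : ι) : InCorner (single i i (1 : S)) (single j j 1) (single i j 1) := by
  simp [InCorner]

lemma inCorner_single_mul_mul (i j : ι) (x : Matrix ι ι S) :
    InCorner (single i i 1) (single j j 1) (single i i 1 * x * single j j 1) :=
  .of_idempotent (by simp) (by simp) x

lemma single_one_mul_single_one_mul {i : ι} {u : Matrix ι ι S} (hu : single i i 1 * u = u)
    (k : ι) : single i k 1 * (single k i 1 * u) = u := by
  rw [← mul_assoc, single_mul_single_same, mul_one, hu]

lemma mul_single_one_mul_single_one {j : ι} {u : Matrix ι ι S} (hu : u * single j j 1 = u)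
    (k : ι) : u * single j k 1 * single k j 1 = u := by
  rw [mul_assoc, single_mul_single_same, mul_one, hu]

lemma induction_on_corner {p : Matrix ι ι S → Prop} (h0 : p 0)
    (hadd : ∀ x y, p x → p y → p (x + y))
    (hcorner : ∀ i j u, InCorner (single i i 1) (single j j 1) u → p u) (x : Matrix ι ι S) :
    p x := by
  have hx : x = ∑ i, ∑ j, single i i 1 * x * single j j 1 := by
    simp only [← Finset.mul_sum, ← Finset.sum_mul, sum_single_one, mul_one, one_mul]
  rw [hx]
  exact Finset.sum_induction _ p hadd h0 fun i _ =>
    Finset.sum_induction _ p hadd h0 fun j _ => hcorner i j _ (inCorner_single_mul_mul i j x)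

end Matrix

namespace MatrixJordanHom

variable {ι S R' : Type*} [DecidableEq ι] [Ring S]

section Components

variable (φ : Matrix ι ι S → R')

def diagUnit (i : ι) : R' := φ (single i i 1)

@[simp] lemma diagUnit_op (i : ι) : diagUnit (op ∘ φ) i = op (diagUnit φ i) := rfl

variable [NonUnitalRing R']

def component (i j : ι) (u : Matrix ι ι S) : R' := diagUnit φ i * φ u * diagUnit φ j

def offUnit (i j : ι) : R' := component φ i j (single i j 1)

def homIdem (i j : ι) : R' := offUnit φ i j * offUnit φ j i

def antiIdem (i j : ι) : R' := component φ i j (single j i 1) * component φ j i (single i j 1)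

@[simp] lemma component_op (i j : ι) (u : Matrix ι ι S) :
    component (op ∘ φ) i j u = op (component φ j i u) := by
  simp [component, mul_assoc]

lemma homIdem_op (i j : ι) : homIdem (op ∘ φ) i j = op (antiIdem φ i j) := by
  simp [homIdem, offUnit, antiIdem]

end Components

variable [Fintype ι] [NonUnitalRing R'] {φ : Matrix ι ι S → R'} {i j k l : ι}
  {u v z z' : Matrix ι ι S}

lemma diagUnit_mul_self (hφ : IsJordanHom φ) (i : ι) :
    diagUnit φ i * diagUnit φ i = diagUnit φ i := by
  simpa [diagUnit] using (hφ.2.1 (single i i 1)).symm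

lemma diagUnit_mul_of_ne (hφ : IsJordanHom φ) (hij : i ≠ j) :
    diagUnit φ i * diagUnit φ j = 0 := by
  have hsum : diagUnit φ i * diagUnit φ j = -(diagUnit φ j * diagUnit φ i) := by
    have h := hφ.map_mul_add_mul (single i i 1) (single j j 1)
    rw [single_mul_single_of_ne 1 i i j hij 1, single_mul_single_of_ne 1 j j i hij.symm 1,
      add_zero, hφ.map_zero] at h
    exact eq_neg_of_add_eq_zero_left h.symm
  have hsand : diagUnit φ i * diagUnit φ j * diagUnit φ i = 0 := by
    have h := hφ.2.2 (single i i 1) (single j j 1)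
    rw [single_mul_single_of_ne 1 i i j hij 1, zero_mul, hφ.map_zero] at h
    exact h.symm
  calc diagUnit φ i * diagUnit φ j = diagUnit φ i * (diagUnit φ i * diagUnit φ j) := by
        rw [← mul_assoc, diagUnit_mul_self hφ]
    _ = 0 := by rw [hsum, mul_neg, ← mul_assoc, hsand, neg_zero]

lemma inCorner_component (hφ : IsJordanHom φ) (i j : ι) (u : Matrix ι ι S) :
    InCorner (diagUnit φ i) (diagUnit φ j) (component φ i j u) :=
  .of_idempotent (diagUnit_mul_self hφ i) (diagUnit_mul_self hφ j) _

lemma map_eq_component_self (hφ : IsJordanHom φ) (hz : InCorner (single i i 1) (single i i 1) z) :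
    φ z = component φ i i z := by
  simpa [hz.mul_mul_eq, component, diagUnit] using hφ.2.2 (single i i 1) z

lemma inCorner_map_of_diag (hφ : IsJordanHom φ)
    (hz : InCorner (single i i 1) (single i i 1) z) :
    InCorner (diagUnit φ i) (diagUnit φ i) (φ z) := by
  rw [map_eq_component_self hφ hz]
  exact inCorner_component hφ i i z

lemma map_eq_component_add (hφ : IsJordanHom φ) (hij : i ≠ j)
    (hu : InCorner (single i i 1) (single j j 1) u) :
    φ u = component φ i j u + component φ j i u := by
  have h := hφ.map_mul_mul_add_mul_mul (single i i 1) (single j j 1) u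
  have h0 : single j j 1 * u * single i i 1 = 0 := by
    rw [hu.mul_eq_zero_of_left (single_mul_single_of_ne 1 j j i hij.symm 1), zero_mul]
  rwa [hu.mul_mul_eq, h0, add_zero] at h

lemma diagUnit_mul_map (hφ : IsJordanHom φ) (hu : InCorner (single i i 1) (single j j 1) u) :
    diagUnit φ i * φ u = component φ i j u := by
  rcases eq_or_ne i j with rfl | hij
  · rw [map_eq_component_self hφ hu, (inCorner_component hφ i i u).1]
  · rw [map_eq_component_add hφ hij hu, mul_add, (inCorner_component hφ i j u).1,
      (inCorner_component hφ j i u).mul_eq_zero_of_left (diagUnit_mul_of_ne hφ hij), add_zero]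

lemma diagUnit_mul_map_swap (hφ : IsJordanHom φ)
    (hu : InCorner (single i i 1) (single j j 1) u) :
    diagUnit φ j * φ u = component φ j i u := by
  rcases eq_or_ne i j with rfl | hij
  · exact diagUnit_mul_map hφ hu
  · rw [map_eq_component_add hφ hij hu, mul_add, (inCorner_component hφ j i u).1,
      (inCorner_component hφ i j u).mul_eq_zero_of_left (diagUnit_mul_of_ne hφ hij.symm),
      zero_add]

lemma diagUnit_mul_map_eq_zero (hφ : IsJordanHom φ)
    (hu : InCorner (single i i 1) (single j j 1) u) (hki : k ≠ i) (hkj : k ≠ j) :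
    diagUnit φ k * φ u = 0 := by
  rcases eq_or_ne i j with rfl | hij
  · exact (inCorner_map_of_diag hφ hu).mul_eq_zero_of_left (diagUnit_mul_of_ne hφ hki)
  · rw [map_eq_component_add hφ hij hu, mul_add,
      (inCorner_component hφ i j u).mul_eq_zero_of_left (diagUnit_mul_of_ne hφ hki),
      (inCorner_component hφ j i u).mul_eq_zero_of_left (diagUnit_mul_of_ne hφ hkj), add_zero]

lemma map_mul_diagUnit (hφ : IsJordanHom φ) (hu : InCorner (single i i 1) (single j j 1) u) :
    φ u * diagUnit φ j = component φ i j u :=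
  op_injective (by simpa using diagUnit_mul_map_swap hφ.op hu)

lemma map_mul_diagUnit_swap (hφ : IsJordanHom φ)
    (hu : InCorner (single i i 1) (single j j 1) u) :
    φ u * diagUnit φ i = component φ j i u :=
  op_injective (by simpa using diagUnit_mul_map hφ.op hu)

lemma map_mul_diagUnit_eq_zero (hφ : IsJordanHom φ)
    (hu : InCorner (single i i 1) (single j j 1) u) (hki : k ≠ i) (hkj : k ≠ j) :
    φ u * diagUnit φ k = 0 :=
  op_injective (by simpa using diagUnit_mul_map_eq_zero hφ.op hu hki hkj)

lemma component_mul (hφ : IsJordanHom φ) (hil : i ≠ l)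
    (hu : InCorner (single i i 1) (single j j 1) u)
    (hv : InCorner (single j j 1) (single l l 1) v) :
    component φ i l (u * v) = component φ i j u * component φ j l v := by
  have hvu : v * u = 0 := hv.mul_eq_zero hu (single_mul_single_of_ne 1 l l i hil.symm 1)
  have h := hφ.map_mul_add_mul u v
  rw [hvu, add_zero] at h
  have hcross : diagUnit φ i * (φ v * φ u) * diagUnit φ l = 0 := by
    rcases eq_or_ne i j with rfl | hij
    · rw [mul_assoc, mul_assoc, map_mul_diagUnit_eq_zero hφ hu hil.symm hil.symm, mul_zero,
        mul_zero]
    · rw [← mul_assoc, diagUnit_mul_map_eq_zero hφ hv hij hil, zero_mul, zero_mul]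
  rw [component, h, mul_add, add_mul, hcross, add_zero, ← diagUnit_mul_map hφ hu,
    ← map_mul_diagUnit hφ hv]
  simp only [mul_assoc]

lemma component_mul_rev (hφ : IsJordanHom φ) (hil : i ≠ l)
    (hu : InCorner (single i i 1) (single j j 1) u)
    (hv : InCorner (single j j 1) (single l l 1) v) :
    component φ l i (u * v) = component φ l j v * component φ j i u :=
  op_injective (by simpa using component_mul hφ.op hil hu hv)

lemma map_mul_of_ne (hφ : IsJordanHom φ) (hij : i ≠ j)
    (hu : InCorner (single i i 1) (single j j 1) u)
    (hv : InCorner (single j j 1) (single i i 1) v) :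
    φ (u * v) =
      component φ i j u * component φ j i v + component φ i j v * component φ j i u := by
  have hvu : diagUnit φ i * φ (v * u) = 0 := diagUnit_mul_map_eq_zero hφ (hv.mul hu) hij hij
  calc φ (u * v) = component φ i i (u * v) := map_eq_component_self hφ (hu.mul hv)
    _ = diagUnit φ i * φ (u * v + v * u) * diagUnit φ i := by
        rw [hφ.map_add, mul_add, hvu, add_zero]; rfl
    _ = diagUnit φ i * φ u * (φ v * diagUnit φ i) +
          diagUnit φ i * φ v * (φ u * diagUnit φ i) := by
        rw [hφ.map_mul_add_mul]
        noncomm_ring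
    _ = _ := by
        rw [diagUnit_mul_map hφ hu, map_mul_diagUnit hφ hv, diagUnit_mul_map_swap hφ hv,
          map_mul_diagUnit_swap hφ hu]

lemma diagUnit_eq_homIdem_add_antiIdem (hφ : IsJordanHom φ) (hij : i ≠ j) :
    diagUnit φ i = homIdem φ i j + antiIdem φ i j := by
  have h := map_mul_of_ne hφ hij (inCorner_single i j) (inCorner_single j i)
  rwa [single_mul_single_same, mul_one] at h

lemma inCorner_homIdem (hφ : IsJordanHom φ) (i j : ι) :
    InCorner (diagUnit φ i) (diagUnit φ i) (homIdem φ i j) :=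
  (inCorner_component hφ i j _).mul (inCorner_component hφ j i _)

lemma offUnit_mul_offUnit (hφ : IsJordanHom φ) (hik : i ≠ k) (j : ι) :
    offUnit φ i j * offUnit φ j k = offUnit φ i k := by
  have h := component_mul (φ := φ) hφ hik (inCorner_single i j) (inCorner_single j k)
  rw [single_mul_single_same, mul_one] at h
  exact h.symm

lemma offUnit_mul_offUnit_mul_offUnit (hφ : IsJordanHom φ) (i j : ι) :
    offUnit φ i j * offUnit φ j i * offUnit φ i j = offUnit φ i j := by
  have hx := inCorner_component hφ i j (single i j 1)
  symm
  calc offUnit φ i j = component φ i j (single i j 1 * single j i 1 * single i j 1) := by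
        simp [offUnit]
    _ = diagUnit φ i * φ (single i j 1) * φ (single j i 1) *
          (φ (single i j 1) * diagUnit φ j) := by
        rw [component, hφ.2.2]
        simp only [mul_assoc]
    _ = offUnit φ i j * diagUnit φ j * φ (single j i 1) * (diagUnit φ i * offUnit φ i j) := by
        rw [diagUnit_mul_map hφ (inCorner_single i j), map_mul_diagUnit hφ (inCorner_single i j),
          offUnit, hx.1, hx.2]
    _ = offUnit φ i j * offUnit φ j i * offUnit φ i j := by
        simp only [offUnit, component, mul_assoc]

lemma homIdem_mul_self (hφ : IsJordanHom φ) (i j : ι) :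
    homIdem φ i j * homIdem φ i j = homIdem φ i j := by
  rw [homIdem, ← mul_assoc, offUnit_mul_offUnit_mul_offUnit hφ]

lemma homIdem_eq_homIdem (hφ : IsJordanHom φ) (hij : i ≠ j) (hik : i ≠ k) :
    homIdem φ i j = homIdem φ i k := by
  rw [homIdem, ← offUnit_mul_offUnit hφ hij k, mul_assoc, offUnit_mul_offUnit hφ hik.symm j,
    homIdem]

lemma map_mul_homIdem_comm (hφ : IsJordanHom φ) (hij : i ≠ j)
    (hz : InCorner (single i i 1) (single i i 1) z) :
    φ z * homIdem φ i j = homIdem φ i j * φ z := by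
  have hleft : φ z = homIdem φ i j * φ z + φ z * antiIdem φ i j := by
    have h := map_mul_of_ne hφ hij (inCorner_single i j) ((inCorner_single j i).mul hz)
    rw [single_one_mul_single_one_mul hz.1, component_mul hφ hij.symm (inCorner_single j i) hz,
      component_mul_rev hφ hij.symm (inCorner_single j i) hz,
      ← map_eq_component_self hφ hz] at h
    simpa only [homIdem, antiIdem, offUnit, mul_assoc] using h
  have hright : φ z = φ z * homIdem φ i j + φ z * antiIdem φ i j := by
    rw [← mul_add, ← diagUnit_eq_homIdem_add_antiIdem hφ hij, (inCorner_map_of_diag hφ hz).2]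
  exact add_right_cancel (hright.symm.trans hleft)

lemma homIdem_mul_component (hφ : IsJordanHom φ) (hij : i ≠ j)
    (hu : InCorner (single i i 1) (single j j 1) u) :
    homIdem φ i j * component φ i j u = component φ i j u := by
  rw [← single_one_mul_single_one_mul hu.1 j,
    component_mul hφ hij (inCorner_single i j) ((inCorner_single j i).mul hu), ← offUnit,
    ← mul_assoc, homIdem, offUnit_mul_offUnit_mul_offUnit hφ]

lemma component_mul_homIdem (hφ : IsJordanHom φ) (hij : i ≠ j)
    (hu : InCorner (single i i 1) (single j j 1) u) :
    component φ i j u * homIdem φ j i = component φ i j u := by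
  rw [← mul_single_one_mul_single_one hu.2 i,
    component_mul hφ hij (hu.mul (inCorner_single j i)) (inCorner_single i j), ← offUnit,
    mul_assoc, homIdem, ← mul_assoc (offUnit φ i j), offUnit_mul_offUnit_mul_offUnit hφ]

lemma component_mul_homIdem_eq_zero (hφ : IsJordanHom φ) (hij : i ≠ j)
    (hu : InCorner (single i i 1) (single j j 1) u) :
    component φ j i u * homIdem φ i j = 0 := by
  have hanti : component φ j i u * antiIdem φ i j = component φ j i u :=
    op_injective (by simpa [homIdem_op] using homIdem_mul_component hφ.op hij hu)
  have h := (inCorner_component hφ j i u).2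
  rwa [diagUnit_eq_homIdem_add_antiIdem hφ hij, mul_add, hanti, add_eq_right] at h

lemma homIdem_mul_component_eq_zero (hφ : IsJordanHom φ) (hij : i ≠ j)
    (hu : InCorner (single i i 1) (single j j 1) u) :
    homIdem φ j i * component φ j i u = 0 := by
  have hanti : antiIdem φ j i * component φ j i u = component φ j i u :=
    op_injective (by simpa [homIdem_op] using component_mul_homIdem hφ.op hij hu)
  have h := (inCorner_component hφ j i u).1
  rwa [diagUnit_eq_homIdem_add_antiIdem hφ hij.symm, add_mul, hanti, add_eq_right] at h

lemma map_mul_mul_homIdem (hφ : IsJordanHom φ) (hij : i ≠ j)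
    (hz : InCorner (single i i 1) (single i i 1) z)
    (hz' : InCorner (single i i 1) (single i i 1) z') :
    φ (z * z') * homIdem φ i j = φ z * φ z' * homIdem φ i j := by
  have h : φ (z * z') * offUnit φ i j = φ z * φ z' * offUnit φ i j := by
    have hmul := component_mul hφ hij hz (hz'.mul (inCorner_single i j))
    rw [component_mul hφ hij hz' (inCorner_single i j), ← mul_assoc,
      component_mul hφ hij (hz.mul hz') (inCorner_single i j), ← map_eq_component_self hφ hz,
      ← map_eq_component_self hφ hz', ← map_eq_component_self hφ (hz.mul hz'), ← offUnit,
      ← mul_assoc] at hmul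
    exact hmul
  rw [homIdem, ← mul_assoc, h, mul_assoc]

section Projection

variable [Nontrivial ι]

variable (φ) in
/-- `homIdem φ i j` does not depend on `j ≠ i` (`homIdem_eq_homIdem`), so any partner will do. -/
noncomputable def homProj : R' := ∑ i, homIdem φ i (exists_ne i).choose

lemma homIdem_choose_eq (hφ : IsJordanHom φ) (hij : i ≠ j) :
    homIdem φ i (exists_ne i).choose = homIdem φ i j :=
  homIdem_eq_homIdem hφ (exists_ne i).choose_spec.symm hij

lemma mul_homProj (hφ : IsJordanHom φ) {w : R'}
    (hw : InCorner (diagUnit φ i) (diagUnit φ j) w) :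
    w * homProj φ = w * homIdem φ j (exists_ne j).choose := by
  rw [homProj, Finset.mul_sum, Fintype.sum_eq_single j fun k hkj =>
    hw.mul_eq_zero (inCorner_homIdem hφ k _) (diagUnit_mul_of_ne hφ hkj.symm)]

lemma homProj_mul (hφ : IsJordanHom φ) {w : R'}
    (hw : InCorner (diagUnit φ i) (diagUnit φ j) w) :
    homProj φ * w = homIdem φ i (exists_ne i).choose * w := by
  rw [homProj, Finset.sum_mul, Fintype.sum_eq_single i fun k hki =>
    (inCorner_homIdem hφ k _).mul_eq_zero hw (diagUnit_mul_of_ne hφ hki)]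

lemma map_mul_homProj_of_ne (hφ : IsJordanHom φ) (hij : i ≠ j)
    (hu : InCorner (single i i 1) (single j j 1) u) :
    φ u * homProj φ = component φ i j u := by
  rw [map_eq_component_add hφ hij hu, add_mul, mul_homProj hφ (inCorner_component hφ i j u),
    mul_homProj hφ (inCorner_component hφ j i u), homIdem_choose_eq hφ hij.symm,
    homIdem_choose_eq hφ hij, component_mul_homIdem hφ hij hu,
    component_mul_homIdem_eq_zero hφ hij hu, add_zero]

lemma homProj_mul_map_of_ne (hφ : IsJordanHom φ) (hij : i ≠ j)
    (hu : InCorner (single i i 1) (single j j 1) u) :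
    homProj φ * φ u = component φ i j u := by
  rw [map_eq_component_add hφ hij hu, mul_add, homProj_mul hφ (inCorner_component hφ i j u),
    homProj_mul hφ (inCorner_component hφ j i u), homIdem_choose_eq hφ hij,
    homIdem_choose_eq hφ hij.symm, homIdem_mul_component hφ hij hu,
    homIdem_mul_component_eq_zero hφ hij hu, add_zero]

lemma commute_map_homProj (hφ : IsJordanHom φ) (x : Matrix ι ι S) :
    Commute (φ x) (homProj φ) := by
  induction x using Matrix.induction_on_corner with
  | h0 => simp [Commute, SemiconjBy, hφ.map_zero]
  | hadd x y hx hy => rw [hφ.map_add]; exact hx.add_left hy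
  | hcorner i j u hu =>
    rcases eq_or_ne i j with rfl | hij
    · have hφu := inCorner_map_of_diag hφ hu
      rw [Commute, SemiconjBy, mul_homProj hφ hφu, homProj_mul hφ hφu,
        map_mul_homIdem_comm hφ (exists_ne i).choose_spec.symm hu]
    · exact (map_mul_homProj_of_ne hφ hij hu).trans (homProj_mul_map_of_ne hφ hij hu).symm

lemma homProj_mul_self (hφ : IsJordanHom φ) : homProj φ * homProj φ = homProj φ := by
  calc homProj φ * homProj φ = ∑ i, homIdem φ i (exists_ne i).choose * homProj φ :=
        Finset.sum_mul _ _ _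
    _ = homProj φ := Finset.sum_congr rfl fun i _ => by
        rw [mul_homProj hφ (inCorner_homIdem hφ i _), homIdem_mul_self hφ]

lemma inCorner_map_mul_homProj (hφ : IsJordanHom φ)
    (hu : InCorner (single i i 1) (single j j 1) u) :
    InCorner (diagUnit φ i) (diagUnit φ j) (φ u * homProj φ) := by
  rcases eq_or_ne i j with rfl | hij
  · have hφu := inCorner_map_of_diag hφ hu
    rw [mul_homProj hφ hφu]
    exact hφu.mul (inCorner_homIdem hφ i _)
  · rw [map_mul_homProj_of_ne hφ hij hu]
    exact inCorner_component hφ i j u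

lemma map_mul_homProj_of_inCorner (hφ : IsJordanHom φ)
    (hu : InCorner (single i i 1) (single j j 1) u)
    (hv : InCorner (single j j 1) (single l l 1) v) :
    φ (u * v) * homProj φ = φ u * homProj φ * (φ v * homProj φ) := by
  rcases eq_or_ne i j with rfl | hij
  · have hφu := inCorner_map_of_diag hφ hu
    rcases eq_or_ne i l with rfl | hil
    · have hi := (exists_ne i).choose_spec.symm
      rw [mul_homProj hφ (inCorner_map_of_diag hφ (hu.mul hv)), mul_homProj hφ hφu,
        mul_homProj hφ (inCorner_map_of_diag hφ hv), map_mul_mul_homIdem hφ hi hu hv]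
      conv_rhs => rw [mul_assoc, ← mul_assoc (homIdem φ i _), ← map_mul_homIdem_comm hφ hi hv,
        mul_assoc, homIdem_mul_self hφ, ← mul_assoc]
    · rw [map_mul_homProj_of_ne hφ hil (hu.mul hv), map_mul_homProj_of_ne hφ hil hv,
        mul_homProj hφ hφu, homIdem_choose_eq hφ hil, mul_assoc, homIdem_mul_component hφ hil hv,
        component_mul hφ hil hu hv, ← map_eq_component_self hφ hu]
  · rcases eq_or_ne j l with rfl | hjl
    · rw [map_mul_homProj_of_ne hφ hij (hu.mul hv), map_mul_homProj_of_ne hφ hij hu,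
        mul_homProj hφ (inCorner_map_of_diag hφ hv), homIdem_choose_eq hφ hij.symm, ← mul_assoc,
        ← component_mul_homIdem hφ hij (hu.mul hv), component_mul hφ hij hu hv,
        ← map_eq_component_self hφ hv]
    · rcases eq_or_ne i l with rfl | hil
      · rw [mul_homProj hφ (inCorner_map_of_diag hφ (hu.mul hv)), homIdem_choose_eq hφ hij,
          map_mul_of_ne hφ hij hu hv, map_mul_homProj_of_ne hφ hij hu,
          map_mul_homProj_of_ne hφ hjl hv, add_mul, mul_assoc, mul_assoc,
          component_mul_homIdem hφ hjl hv, component_mul_homIdem_eq_zero hφ hij hu, mul_zero,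
          add_zero]
      · rw [map_mul_homProj_of_ne hφ hil (hu.mul hv), map_mul_homProj_of_ne hφ hij hu,
          map_mul_homProj_of_ne hφ hjl hv, component_mul hφ hil hu hv]

lemma map_mul_mul_homProj (hφ : IsJordanHom φ) (x y : Matrix ι ι S) :
    φ (x * y) * homProj φ = φ x * homProj φ * (φ y * homProj φ) := by
  induction x using Matrix.induction_on_corner with
  | h0 => simp [hφ.map_zero]
  | hadd x x' hx hx' => simp only [add_mul, hφ.map_add, hx, hx']
  | hcorner i j u hu =>
    induction y using Matrix.induction_on_corner with
    | h0 => simp [hφ.map_zero]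
    | hadd y y' hy hy' => simp only [mul_add, hφ.map_add, add_mul, hy, hy']
    | hcorner k l v hv =>
      rcases eq_or_ne j k with rfl | hjk
      · exact map_mul_homProj_of_inCorner hφ hu hv
      · rw [hu.mul_eq_zero hv (single_mul_single_of_ne 1 j j k hjk 1), hφ.map_zero, zero_mul,
          (inCorner_map_mul_homProj hφ hu).mul_eq_zero (inCorner_map_mul_homProj hφ hv)
            (diagUnit_mul_of_ne hφ hjk)]

lemma homProj_mem_rngGen : homProj φ ∈ rngGen φ :=
  NonUnitalSubring.sum_mem _ fun i _ => by
    simp only [homIdem, offUnit, component, diagUnit]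
    apply_rules [mul_mem, map_mem_rngGen]

lemma homProj_op (hφ : IsJordanHom φ) : homProj (op ∘ φ) = op (φ 1 - homProj φ) := by
  simp only [homProj, homIdem_op, ← Finset.op_sum]
  congr 1
  rw [eq_sub_iff_add_eq, ← Finset.sum_add_distrib, ← sum_single_one, hφ.map_sum]
  refine Finset.sum_congr rfl fun i _ => ?_
  rw [add_comm, ← diagUnit_eq_homIdem_add_antiIdem hφ (exists_ne i).choose_spec.symm, diagUnit]

lemma commute_map_sub_homProj (hφ : IsJordanHom φ) (x : Matrix ι ι S) :
    Commute (φ x) (φ 1 - homProj φ) := by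
  simpa [homProj_op hφ] using (commute_map_homProj hφ.op x).unop

lemma map_mul_mul_sub_homProj (hφ : IsJordanHom φ) (x y : Matrix ι ι S) :
    φ (x * y) * (φ 1 - homProj φ) =
      φ y * (φ 1 - homProj φ) * (φ x * (φ 1 - homProj φ)) := by
  have h := congrArg unop (map_mul_mul_homProj hφ.op x y)
  simp only [homProj_op hφ, Function.comp_apply, unop_mul, unop_op] at h
  rw [(commute_map_sub_homProj hφ _).eq, h, ← (commute_map_sub_homProj hφ x).eq,
    ← (commute_map_sub_homProj hφ y).eq]

theorem isSplittingIdempotent_homProj (hφ : IsJordanHom φ) :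
    IsSplittingIdempotent φ (homProj φ) :=
  ⟨homProj_mem_rngGen, commute_map_homProj hφ, homProj_mul_self hφ, map_mul_mul_homProj hφ,
    map_mul_mul_sub_homProj hφ⟩

end Projection

end MatrixJordanHom

/-- Jacobson–Rickart: every Jordan homomorphism from a full matrix ring `Mₙ(S)`
(`n ≥ 2`, `S` unital) into any ring `R'` is the sum of a homomorphism and an
antihomomorphism on the whole ring; in particular it is splittable. -/
theorem matrix_jordanHom_sum {S : Type*} [Ring S] {n : ℕ} (hn : 2 ≤ n)
    {R' : Type*} [NonUnitalRing R']
    (φ : Matrix (Fin n) (Fin n) S → R') (hφ : IsJordanHom φ) :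
    IsSumHomAntihomOn φ (⊤ : TwoSidedIdeal (Matrix (Fin n) (Fin n) S)) ∧ Splittable φ := by
  have : Nontrivial (Fin n) := Fin.nontrivial_iff_two_le.2 hn
  have h := MatrixJordanHom.isSplittingIdempotent_homProj hφ
  exact ⟨h.isSumHomAntihomOn hφ, h.splittable hφ⟩
end

section
/- Let R be a 2-torsion free unital ring containing elements a and b with [a,b] = ab − ba = 1, and suppose R' is 2-torsion free. Then every Jordan homomorphism φ : R → R' is the sum of a homomorphism and an antihomomorphism on the whole ring R (taking I = R in the definition); in particular, φ is splittable. -/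
section JordanAux
variable {R R' : Type*} [Ring R] [NonUnitalRing R'] {φ : R → R'}

private lemma jh_zero (hadd : ∀ x y : R, φ (x+y) = φ x + φ y) : φ 0 = 0 := by
  have h := hadd 0 0
  simp only [add_zero] at h
  exact (left_eq_add.mp h)

private lemma jh_sub (hadd : ∀ x y : R, φ (x+y) = φ x + φ y) :
    ∀ x y : R, φ (x - y) = φ x - φ y := by
  have hneg : ∀ x : R, φ (-x) = - φ x := by
    intro x
    have h := hadd x (-x)
    simp only [add_neg_cancel, jh_zero hadd] at h
    exact (eq_neg_of_add_eq_zero_right h.symm)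
  intro x y
  rw [sub_eq_add_neg, hadd, hneg, ← sub_eq_add_neg]

private lemma jh_J1 (hadd : ∀ x y : R, φ (x+y) = φ x + φ y)
    (hsq : ∀ x : R, φ (x*x) = φ x * φ x) :
    ∀ x y : R, φ (x*y) + φ (y*x) = φ x * φ y + φ y * φ x := by
  intro x y
  have h := hsq (x+y)
  rw [show ((x+y)*(x+y) : R) = x*x + (x*y + (y*x + y*y)) by noncomm_ring] at h
  simp only [hadd] at h
  rw [hsq x, hsq y] at h
  linear_combination (norm := noncomm_ring) h

private lemma jh_J2 (hadd : ∀ x y : R, φ (x+y) = φ x + φ y)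
    (htri : ∀ x y : R, φ (x*y*x) = φ x * φ y * φ x) :
    ∀ x y z : R, φ (x*y*z) + φ (z*y*x) = φ x * φ y * φ z + φ z * φ y * φ x := by
  intro x y z
  have h := htri (x+z) y
  rw [show ((x+z)*y*(x+z) : R) = x*y*x + (x*y*z + (z*y*x + z*y*z)) by noncomm_ring] at h
  simp only [hadd] at h
  rw [htri x y, htri z y] at h
  linear_combination (norm := noncomm_ring) h

private lemma jh_L3 (hadd : ∀ x y : R, φ (x+y) = φ x + φ y)
    (hsq : ∀ x : R, φ (x*x) = φ x * φ x)
    (htri : ∀ x y : R, φ (x*y*x) = φ x * φ y * φ x) :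
    ∀ x y z : R, φ (z*(x*y)) - φ (z*(y*x)) =
      (φ (x*y) - φ x * φ y) * φ z + φ z * (φ (x*y) - φ y * φ x) := by
  intro x y z
  have h1 := jh_J1 hadd hsq (x*y) z
  have h2 := jh_J2 hadd htri x y z
  rw [show ((z*y)*x : R) = z*(y*x) from mul_assoc z y x] at h2
  linear_combination (norm := noncomm_ring) h1 - h2

private lemma jh_L4 (hadd : ∀ x y : R, φ (x+y) = φ x + φ y)
    (hsq : ∀ x : R, φ (x*x) = φ x * φ x)
    (htri : ∀ x y : R, φ (x*y*x) = φ x * φ y * φ x) :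
    ∀ x y z : R, φ ((x*y)*z) - φ ((y*x)*z) =
      φ z * (φ (x*y) - φ x * φ y) + (φ (x*y) - φ y * φ x) * φ z := by
  intro x y z
  have h1 := jh_J1 hadd hsq z (x*y)
  have h2 := jh_J2 hadd htri z x y
  rw [show ((z*x)*y : R) = z*(x*y) from mul_assoc z x y] at h2
  linear_combination (norm := noncomm_ring) h1 - h2

private lemma jh_ABBA (hadd : ∀ x y : R, φ (x+y) = φ x + φ y)
    (hsq : ∀ x : R, φ (x*x) = φ x * φ x)
    (htri : ∀ x y : R, φ (x*y*x) = φ x * φ y * φ x) :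
    ∀ x y : R, (φ (x*y) - φ x * φ y) * (φ (x*y) - φ y * φ x)
      + (φ (x*y) - φ y * φ x) * (φ (x*y) - φ x * φ y) = 0 := by
  intro x y
  have h1 := jh_J1 hadd hsq x y
  have h2 := jh_J1 hadd hsq x (y*x*y)
  rw [htri y x] at h2
  rw [show (x*(y*x*y) : R) = (x*y)*(x*y) by noncomm_ring,
      show ((y*x*y)*x : R) = (y*x)*(y*x) by noncomm_ring] at h2
  rw [hsq (x*y), hsq (y*x)] at h2
  have hQ : φ (y*x) = φ x * φ y + φ y * φ x - φ (x*y) := by linear_combination (norm := noncomm_ring) h1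
  rw [hQ] at h2
  linear_combination (norm := noncomm_ring) h2

private lemma jh_ABmBA (hadd : ∀ x y : R, φ (x+y) = φ x + φ y)
    (hsq : ∀ x : R, φ (x*x) = φ x * φ x)
    (htri : ∀ x y : R, φ (x*y*x) = φ x * φ y * φ x) :
    ∀ x y : R, (φ (x*y) - φ x * φ y) * (φ (x*y) - φ y * φ x)
      - (φ (x*y) - φ y * φ x) * (φ (x*y) - φ x * φ y) = 0 := by
  intro x y
  have h3 := jh_L3 hadd hsq htri x y (x*y)
  have h4 := jh_L4 hadd hsq htri x y (x*y)
  have h5 : φ ((y*x)*(x*y)) = φ y * (φ x * φ x) * φ y := by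
    rw [show ((y*x)*(x*y) : R) = y*(x*x)*y by noncomm_ring, htri, hsq]
  have h6 : φ ((x*y)*(y*x)) = φ x * (φ y * φ y) * φ x := by
    rw [show ((x*y)*(y*x) : R) = x*(y*y)*x by noncomm_ring, htri, hsq]
  rw [h6] at h3
  rw [h5] at h4
  linear_combination (norm := noncomm_ring) h4 - h3

private lemma jh_AB (htf : ∀ a : R', a + a = 0 → a = 0)
    (hadd : ∀ x y : R, φ (x+y) = φ x + φ y)
    (hsq : ∀ x : R, φ (x*x) = φ x * φ x)
    (htri : ∀ x y : R, φ (x*y*x) = φ x * φ y * φ x) :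
    ∀ x y : R, (φ (x*y) - φ x * φ y) * (φ (x*y) - φ y * φ x) = 0 := by
  intro x y
  apply htf
  linear_combination (norm := noncomm_ring) jh_ABBA hadd hsq htri x y + jh_ABmBA hadd hsq htri x y

private lemma jh_BA (htf : ∀ a : R', a + a = 0 → a = 0)
    (hadd : ∀ x y : R, φ (x+y) = φ x + φ y)
    (hsq : ∀ x : R, φ (x*x) = φ x * φ x)
    (htri : ∀ x y : R, φ (x*y*x) = φ x * φ y * φ x) :
    ∀ x y : R, (φ (x*y) - φ y * φ x) * (φ (x*y) - φ x * φ y) = 0 := by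
  intro x y
  apply htf
  linear_combination (norm := noncomm_ring) jh_ABBA hadd hsq htri x y - jh_ABmBA hadd hsq htri x y

end JordanAux

/-- If `R` is a 2-torsion free unital ring containing elements `a, b` with
`ab − ba = 1`, and `R'` is 2-torsion free, then every Jordan homomorphism
`φ : R → R'` is the sum of a homomorphism and an antihomomorphism on the whole
ring `R`; in particular it is splittable. -/
theorem jordanHom_sum_of_commutator_eq_one {R R' : Type*} [Ring R] [NonUnitalRing R']
    (htfR : ∀ x : R, x + x = 0 → x = 0)
    (htfR' : ∀ a : R', a + a = 0 → a = 0)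
    (a b : R) (hab : a * b - b * a = 1)
    (φ : R → R') (hφ : IsJordanHom φ) :
    IsSumHomAntihomOn φ (⊤ : TwoSidedIdeal R) ∧ Splittable φ := by
  obtain ⟨hadd, hsq, htri⟩ := hφ
  have hsub := jh_sub hadd
  have hAB := jh_AB htfR' hadd hsq htri
  have hBA := jh_BA htfR' hadd hsq htri
  have hJ1 := jh_J1 hadd hsq
  -- membership of the image in the generated subring
  have hmem : ∀ x : R, φ x ∈ rngGen φ := fun x => NonUnitalSubring.subset_closure ⟨x, rfl⟩
  -- φ 1 is an identity on φ(R)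
  have hee : φ 1 * φ 1 = φ 1 := by
    have h := hsq 1; rw [one_mul] at h; exact h.symm
  have hexe : ∀ x : R, φ 1 * φ x * φ 1 = φ x := by
    intro x; have h := htri 1 x; rw [one_mul, mul_one] at h; exact h.symm
  have hel : ∀ x : R, φ 1 * φ x = φ x := by
    intro x
    conv_lhs => rw [← hexe x]
    rw [show φ 1 * (φ 1 * φ x * φ 1) = (φ 1 * φ 1) * φ x * φ 1 by noncomm_ring, hee, hexe]
  have her : ∀ x : R, φ x * φ 1 = φ x := by
    intro x
    conv_lhs => rw [← hexe x]
    rw [show (φ 1 * φ x * φ 1) * φ 1 = φ 1 * φ x * (φ 1 * φ 1) by noncomm_ring, hee, hexe]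
  -- extend to the generated subring
  have helG : ∀ r ∈ rngGen φ, φ 1 * r = r := by
    intro r hr
    induction hr using NonUnitalSubring.closure_induction with
    | mem x hx => obtain ⟨y, rfl⟩ := hx; exact hel y
    | zero => exact mul_zero _
    | add x y hx hy ihx ihy => rw [mul_add, ihx, ihy]
    | neg x hx ih => rw [mul_neg, ih]
    | mul x y hx hy ihx ihy => rw [← mul_assoc, ihx]
  have herG : ∀ r ∈ rngGen φ, r * φ 1 = r := by
    intro r hr
    induction hr using NonUnitalSubring.closure_induction with
    | mem x hx => obtain ⟨y, rfl⟩ := hx; exact her y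
    | zero => exact zero_mul _
    | add x y hx hy ihx ihy => rw [add_mul, ihx, ihy]
    | neg x hx ih => rw [neg_mul, ih]
    | mul x y hx hy ihx ihy => rw [mul_assoc, ihy]
  have hcomm : ∀ z : R', (∀ x : R, z * φ x = φ x * z) → ∀ r ∈ rngGen φ, z * r = r * z := by
    intro z hz r hr
    induction hr using NonUnitalSubring.closure_induction with
    | mem x hx => obtain ⟨y, rfl⟩ := hx; exact hz y
    | zero => rw [mul_zero, zero_mul]
    | add x y hx hy ihx ihy => rw [mul_add, add_mul, ihx, ihy]
    | neg x hx ih => rw [mul_neg, neg_mul, ih]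
    | mul x y hx hy ihx ihy => rw [← mul_assoc, ihx, mul_assoc, ihy, ← mul_assoc]
  -- the two central idempotents
  set c : R' := φ (a*b) - φ a * φ b with hc
  set d : R' := φ (a*b) - φ b * φ a with hd
  have hcmem : c ∈ rngGen φ := by
    rw [hc]; exact sub_mem (hmem _) (mul_mem (hmem _) (hmem _))
  have hdmem : d ∈ rngGen φ := by
    rw [hd]; exact sub_mem (hmem _) (mul_mem (hmem _) (hmem _))
  have hcd_sum : c + d = φ 1 := by
    have h1 := hJ1 a b
    have h3 : φ (a*b) - φ (b*a) = φ 1 := by rw [← hsub, hab]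
    rw [hc, hd]
    linear_combination (norm := noncomm_ring) h1 + h3
  have hLa : ∀ z : R, φ z = c * φ z + φ z * d := by
    intro z
    have h := jh_L3 hadd hsq htri a b z
    rw [← hsub, show (z*(a*b) - z*(b*a) : R) = z*(a*b - b*a) by noncomm_ring, hab, mul_one] at h
    rw [hc, hd]; exact h
  have hRa : ∀ z : R, φ z = φ z * c + d * φ z := by
    intro z
    have h := jh_L4 hadd hsq htri a b z
    rw [← hsub, show ((a*b)*z - (b*a)*z : R) = (a*b - b*a)*z by noncomm_ring, hab, one_mul] at h
    rw [hc, hd]; exact h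
  have hsum_l : ∀ z : R, φ z = c * φ z + d * φ z := by
    intro z; rw [← add_mul, hcd_sum]; exact (hel z).symm
  have hsum_r : ∀ z : R, φ z = φ z * c + φ z * d := by
    intro z; rw [← mul_add, hcd_sum]; exact (her z).symm
  have hdcomm : ∀ x : R, d * φ x = φ x * d := by
    intro z
    exact (add_left_cancel ((hLa z).symm.trans (hsum_l z))).symm
  have hccomm : ∀ x : R, c * φ x = φ x * c := by
    intro z
    exact (add_right_cancel ((hRa z).symm.trans (hsum_l z))).symm
  have hcG : ∀ r ∈ rngGen φ, c * r = r * c := hcomm c hccomm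
  have hdG : ∀ r ∈ rngGen φ, d * r = r * d := hcomm d hdcomm
  have hcd0 : c * d = 0 := by rw [hc, hd]; exact hAB a b
  have hdc0 : d * c = 0 := by rw [hc, hd]; exact hBA a b
  have hdd : d * d = d := by
    have h := herG d hdmem
    rw [← hcd_sum, mul_add, hdc0, zero_add] at h; exact h
  have hcc : c * c = c := by
    have h := helG c hcmem
    rw [← hcd_sum, add_mul, hdc0, add_zero] at h; exact h
  -- single linearizations
  have hlin1 : ∀ y : R, (φ (a*y) - φ y * φ a) * c + d * (φ (a*y) - φ a * φ y) = 0 := by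
    intro y
    have h := hBA a (y + b)
    rw [show (a*(y+b) : R) = a*y + a*b by noncomm_ring] at h
    simp only [hadd] at h
    rw [hc, hd]
    linear_combination (norm := noncomm_ring) h - hBA a y - hBA a b
  have hdA_a : ∀ y : R, d * (φ (a*y) - φ a * φ y) = 0 := by
    intro y
    have h := hlin1 y
    have hcomm1 : d * (φ (a*y) - φ y * φ a) = (φ (a*y) - φ y * φ a) * d :=
      hdG _ (sub_mem (hmem _) (mul_mem (hmem _) (hmem _)))
    linear_combination (norm := noncomm_ring) d * h - hcomm1 * c -
      (φ (a*y) - φ y * φ a) * hdc0 - hdd * (φ (a*y) - φ a * φ y)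
  have hcB_a : ∀ y : R, c * (φ (a*y) - φ y * φ a) = 0 := by
    intro y
    rw [hcG _ (sub_mem (hmem _) (mul_mem (hmem _) (hmem _)))]
    linear_combination (norm := noncomm_ring) hlin1 y - hdA_a y
  have hlin2 : ∀ x : R, (φ (x*b) - φ b * φ x) * c + d * (φ (x*b) - φ x * φ b) = 0 := by
    intro x
    have h := hBA (x + a) b
    rw [show ((x+a)*b : R) = x*b + a*b by noncomm_ring] at h
    simp only [hadd] at h
    rw [hc, hd]
    linear_combination (norm := noncomm_ring) h - hBA x b - hBA a b
  have hdA_b : ∀ x : R, d * (φ (x*b) - φ x * φ b) = 0 := by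
    intro x
    have h := hlin2 x
    have hcomm1 : d * (φ (x*b) - φ b * φ x) = (φ (x*b) - φ b * φ x) * d :=
      hdG _ (sub_mem (hmem _) (mul_mem (hmem _) (hmem _)))
    linear_combination (norm := noncomm_ring) d * h - hcomm1 * c -
      (φ (x*b) - φ b * φ x) * hdc0 - hdd * (φ (x*b) - φ x * φ b)
  have hcB_b : ∀ x : R, c * (φ (x*b) - φ b * φ x) = 0 := by
    intro x
    rw [hcG _ (sub_mem (hmem _) (mul_mem (hmem _) (hmem _)))]
    linear_combination (norm := noncomm_ring) hlin2 x - hdA_b x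
  -- the full double linearization
  have h16 : ∀ x y : R, (φ (x*y) - φ x * φ y) * d + (φ (x*b) - φ x * φ b) * (φ (a*y) - φ y * φ a)
      + (φ (a*y) - φ a * φ y) * (φ (x*b) - φ b * φ x) + c * (φ (x*y) - φ y * φ x) = 0 := by
    intro x y
    have H := hAB (x+a) (y+b)
    rw [show ((x+a)*(y+b) : R) = x*y + (x*b + (a*y + a*b)) by noncomm_ring] at H
    simp only [hadd] at H
    have H1 := hAB x (y+b)
    rw [show (x*(y+b) : R) = x*y + x*b by noncomm_ring] at H1
    simp only [hadd] at H1
    have H2 := hAB a (y+b)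
    rw [show (a*(y+b) : R) = a*y + a*b by noncomm_ring] at H2
    simp only [hadd] at H2
    have H3 := hAB (x+a) y
    rw [show ((x+a)*y : R) = x*y + a*y by noncomm_ring] at H3
    simp only [hadd] at H3
    have H4 := hAB (x+a) b
    rw [show ((x+a)*b : R) = x*b + a*b by noncomm_ring] at H4
    simp only [hadd] at H4
    rw [hc, hd]
    linear_combination (norm := noncomm_ring) H - H1 - H2 - H3 - H4 +
      hAB x y + hAB x b + hAB a y + hAB a b
  have F1 : ∀ x y : R, d * (φ (x*y) - φ x * φ y) = 0 := by
    intro x y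
    have h := h16 x y
    have hcomm1 : d * (φ (x*y) - φ x * φ y) = (φ (x*y) - φ x * φ y) * d :=
      hdG _ (sub_mem (hmem _) (mul_mem (hmem _) (hmem _)))
    linear_combination (norm := noncomm_ring) d * h - hdA_b x * (φ (a*y) - φ y * φ a) -
      hdA_a y * (φ (x*b) - φ b * φ x) - hdc0 * (φ (x*y) - φ y * φ x) - hcomm1 * d -
      (φ (x*y) - φ x * φ y) * hdd + hcomm1
  have F2 : ∀ x y : R, c * (φ (x*y) - φ y * φ x) = 0 := by
    intro x y
    have h := h16 x y
    have hB3c : (φ (a*y) - φ y * φ a) * c = 0 := by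
      rw [← hcG _ (sub_mem (hmem _) (mul_mem (hmem _) (hmem _)))]; exact hcB_a y
    have hB2c : (φ (x*b) - φ b * φ x) * c = 0 := by
      rw [← hcG _ (sub_mem (hmem _) (mul_mem (hmem _) (hmem _)))]; exact hcB_b x
    have hcomm2 : c * (φ (x*y) - φ y * φ x) = (φ (x*y) - φ y * φ x) * c :=
      hcG _ (sub_mem (hmem _) (mul_mem (hmem _) (hmem _)))
    linear_combination (norm := noncomm_ring) h * c - (φ (x*y) - φ x * φ y) * hdc0 -
      (φ (x*b) - φ x * φ b) * hB3c - (φ (a*y) - φ a * φ y) * hB2c - hcomm2 * c -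
      (φ (x*y) - φ y * φ x) * hcc + hcomm2
  -- the ideals
  let J1 : TwoSidedIdeal (rngGen φ) := TwoSidedIdeal.mk'
    {r : rngGen φ | d * (r : R') = (r : R')}
    (by simp)
    (fun {x y} hx hy => by
      simp only [Set.mem_setOf_eq] at *
      push_cast
      rw [mul_add, hx, hy])
    (fun {x} hx => by
      simp only [Set.mem_setOf_eq] at *
      push_cast
      rw [mul_neg, hx])
    (fun {x y} hy => by
      simp only [Set.mem_setOf_eq] at *
      push_cast
      rw [← mul_assoc, hdG _ x.2, mul_assoc, hy])
    (fun {x y} hx => by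
      simp only [Set.mem_setOf_eq] at *
      push_cast
      rw [← mul_assoc, hx])
  let J2 : TwoSidedIdeal (rngGen φ) := TwoSidedIdeal.mk'
    {r : rngGen φ | c * (r : R') = (r : R')}
    (by simp)
    (fun {x y} hx hy => by
      simp only [Set.mem_setOf_eq] at *
      push_cast
      rw [mul_add, hx, hy])
    (fun {x} hx => by
      simp only [Set.mem_setOf_eq] at *
      push_cast
      rw [mul_neg, hx])
    (fun {x y} hy => by
      simp only [Set.mem_setOf_eq] at *
      push_cast
      rw [← mul_assoc, hcG _ x.2, mul_assoc, hy])
    (fun {x y} hx => by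
      simp only [Set.mem_setOf_eq] at *
      push_cast
      rw [← mul_assoc, hx])
  constructor
  · -- sum of hom and antihom
    refine ⟨fun x => ⟨d * φ x, mul_mem hdmem (hmem x)⟩,
      fun x => ⟨c * φ x, mul_mem hcmem (hmem x)⟩, ?_, ?_, ?_, ?_, ?_, ?_, ?_, ?_⟩
    · intro u _ v _
      apply Subtype.ext
      show d * φ (u + v) = d * φ u + d * φ v
      rw [hadd, mul_add]
    · intro u _ v _
      apply Subtype.ext
      show c * φ (u + v) = c * φ u + c * φ v
      rw [hadd, mul_add]
    · intro u _ v _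
      apply Subtype.ext
      show d * φ (u * v) = (d * φ u) * (d * φ v)
      linear_combination (norm := noncomm_ring) F1 u v + hdcomm u * φ v -
        hdcomm u * (d * φ v) - φ u * hdd * φ v
    · intro u _ v _
      apply Subtype.ext
      show c * φ (u * v) = (c * φ v) * (c * φ u)
      linear_combination (norm := noncomm_ring) F2 u v + hccomm v * φ u -
        hccomm v * (c * φ u) - φ v * hcc * φ u
    · intro u _
      show φ u = d * φ u + c * φ u
      linear_combination (norm := noncomm_ring) hsum_l u
    · refine ⟨J1, J2, ?_, ?_, ?_⟩
      · intro u _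
        show _ ∈ J1
        rw [TwoSidedIdeal.mem_mk']
        show d * (d * φ u) = d * φ u
        rw [← mul_assoc, hdd]
      · intro u _
        show _ ∈ J2
        rw [TwoSidedIdeal.mem_mk']
        show c * (c * φ u) = c * φ u
        rw [← mul_assoc, hcc]
      · apply eq_bot_iff.mpr
        intro r hr
        rw [TwoSidedIdeal.mem_inf] at hr
        obtain ⟨h1, h2⟩ := hr
        rw [TwoSidedIdeal.mem_mk'] at h1 h2
        rw [TwoSidedIdeal.mem_bot]
        apply Subtype.ext
        push_cast
        calc (r : R') = d * (r : R') := h1.symm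
          _ = d * (c * (r : R')) := by rw [h2]
          _ = 0 := by rw [← mul_assoc, hdc0, zero_mul]
    · intro u _ x
      constructor
      · show d * φ (u * x) = (d * φ u) * φ x
        linear_combination (norm := noncomm_ring) F1 u x
      · show d * φ (x * u) = φ x * (d * φ u)
        linear_combination (norm := noncomm_ring) F1 x u + hdcomm x * φ u
    · intro u _ x
      constructor
      · show c * φ (u * x) = φ x * (c * φ u)
        linear_combination (norm := noncomm_ring) F2 u x + hccomm x * φ u
      · show c * φ (x * u) = (c * φ u) * φ x
        linear_combination (norm := noncomm_ring) F2 x u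
  · -- splittable
    show Vphi φ ⊓ Wphi φ = ⊥
    let KV : TwoSidedIdeal (rngGen φ) := TwoSidedIdeal.mk'
      {r : rngGen φ | d * (r : R') = 0}
      (by simp)
      (fun {x y} hx hy => by
        simp only [Set.mem_setOf_eq] at *
        push_cast
        rw [mul_add, hx, hy, add_zero])
      (fun {x} hx => by
        simp only [Set.mem_setOf_eq] at *
        push_cast
        rw [mul_neg, hx, neg_zero])
      (fun {x y} hy => by
        simp only [Set.mem_setOf_eq] at *
        push_cast
        rw [← mul_assoc, hdG _ x.2, mul_assoc, hy, mul_zero])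
      (fun {x y} hx => by
        simp only [Set.mem_setOf_eq] at *
        push_cast
        rw [← mul_assoc, hx, zero_mul])
    let KW : TwoSidedIdeal (rngGen φ) := TwoSidedIdeal.mk'
      {r : rngGen φ | c * (r : R') = 0}
      (by simp)
      (fun {x y} hx hy => by
        simp only [Set.mem_setOf_eq] at *
        push_cast
        rw [mul_add, hx, hy, add_zero])
      (fun {x} hx => by
        simp only [Set.mem_setOf_eq] at *
        push_cast
        rw [mul_neg, hx, neg_zero])
      (fun {x y} hy => by
        simp only [Set.mem_setOf_eq] at *
        push_cast
        rw [← mul_assoc, hcG _ x.2, mul_assoc, hy, mul_zero])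
      (fun {x y} hx => by
        simp only [Set.mem_setOf_eq] at *
        push_cast
        rw [← mul_assoc, hx, zero_mul])
    apply eq_bot_iff.mpr
    intro r hr
    rw [TwoSidedIdeal.mem_inf] at hr
    have hV : d * (r : R') = 0 := by
      have h := TwoSidedIdeal.mem_span_iff.mp hr.1 KV ?_
      · rwa [TwoSidedIdeal.mem_mk'] at h
      · rintro s ⟨x, y, hs⟩
        simp only [KV, SetLike.mem_coe, TwoSidedIdeal.mem_mk', Set.mem_setOf_eq]
        rw [hs]
        exact F1 x y
    have hW : c * (r : R') = 0 := by
      have h := TwoSidedIdeal.mem_span_iff.mp hr.2 KW ?_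
      · rwa [TwoSidedIdeal.mem_mk'] at h
      · rintro s ⟨x, y, hs⟩
        simp only [KW, SetLike.mem_coe, TwoSidedIdeal.mem_mk', Set.mem_setOf_eq]
        rw [hs]
        exact F2 x y
    rw [TwoSidedIdeal.mem_bot]
    apply Subtype.ext
    push_cast
    have h := helG (r : R') r.2
    rw [← hcd_sum, add_mul] at h
    linear_combination (norm := noncomm_ring) hV + hW - h
end

section
/- If a Jordan homomorphism φ : R → R' is splittable, then φ is the sum of a homomorphism and an antihomomorphism on the commutator ideal K of R. -/
/-- Auxiliary: `φ` corestricted to `R'_φ`. -/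
def phiS {R R' : Type*} [NonUnitalRing R] [NonUnitalRing R'] (φ : R → R') : R → rngGen φ :=
  fun x => ⟨φ x, NonUnitalSubring.subset_closure ⟨x, rfl⟩⟩

/-- Main theorem: a splittable Jordan homomorphism is the sum of a homomorphism and
an antihomomorphism on the commutator ideal `K` of `R`. -/
theorem splittable_isSumHomAntihomOn_commutatorIdeal
    {R R' : Type*} [NonUnitalRing R] [NonUnitalRing R']
    (φ : R → R') (hφ : IsJordanHom φ) (hs : Splittable φ) :
    IsSumHomAntihomOn φ (commutatorIdeal R) := by
  classical
  obtain ⟨hadd, hsq, -⟩ := hφ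
  -- basic additive facts
  have h0 : φ 0 = 0 := by
    have h := hadd 0 0
    rw [add_zero] at h
    exact (left_eq_add.mp h)
  have hneg : ∀ x : R, φ (-x) = - φ x := by
    intro x
    have h := hadd x (-x)
    rw [add_neg_cancel, h0] at h
    exact eq_neg_of_add_eq_zero_right h.symm
  have hsub : ∀ x y : R, φ (x - y) = φ x - φ y := by
    intro x y
    rw [sub_eq_add_neg, hadd, hneg, ← sub_eq_add_neg]
  -- the fundamental identity
  have key : ∀ x y : R, φ (x * y) + φ (y * x) = φ x * φ y + φ y * φ x := by
    intro x y
    have h := hsq (x + y)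
    have e1 : (x + y) * (x + y) = x * x + (x * y + (y * x + y * y)) := by
      rw [mul_add, add_mul, add_mul]; abel
    rw [e1, hadd, hadd, hadd, hadd, hsq, hsq] at h
    calc φ (x * y) + φ (y * x)
        = (φ (x * x) + (φ (x * y) + (φ (y * x) + φ (y * y)))) - φ (x * x) - φ (y * y) := by
          abel
      _ = (φ x + φ y) * (φ x + φ y) - φ x * φ x - φ y * φ y := by rw [hsq, hsq, h]
      _ = φ x * φ y + φ y * φ x := by rw [mul_add, add_mul, add_mul]; abel
  -- move to the subring
  set f : R → rngGen φ := phiS φ with hf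
  have fadd : ∀ x y : R, f (x + y) = f x + f y := fun x y => Subtype.ext (hadd x y)
  have fsub : ∀ x y : R, f (x - y) = f x - f y := fun x y => Subtype.ext (hsub x y)
  have fneg : ∀ x : R, f (-x) = - f x := fun x => Subtype.ext (hneg x)
  have f0 : f 0 = 0 := Subtype.ext h0
  have fkey : ∀ x y : R, f (x * y) + f (y * x) = f x * f y + f y * f x :=
    fun x y => Subtype.ext (key x y)
  have hgenV : ∀ x y : R, f (x * y) - f x * f y ∈ Vphi φ := fun x y =>
    TwoSidedIdeal.subset_span ⟨x, y, rfl⟩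
  have hgenW : ∀ x y : R, f (x * y) - f y * f x ∈ Wphi φ := fun x y =>
    TwoSidedIdeal.subset_span ⟨x, y, rfl⟩
  have hzero : ∀ a : rngGen φ, a ∈ Vphi φ → a ∈ Wphi φ → a = 0 := by
    intro a h1 h2
    have hmem : a ∈ Vphi φ ⊓ Wphi φ := (TwoSidedIdeal.mem_inf _).mpr ⟨h1, h2⟩
    have hb : Vphi φ ⊓ Wphi φ = ⊥ := hs
    rw [hb] at hmem
    exact (TwoSidedIdeal.mem_bot _).mp hmem
  -- every element of the commutator ideal decomposes
  have Pmem : ∀ u ∈ commutatorIdeal R,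
      ∃ v w : rngGen φ, v ∈ Vphi φ ∧ w ∈ Wphi φ ∧ f u = v + w := by
    have zeroP : ∃ v w : rngGen φ, v ∈ Vphi φ ∧ w ∈ Wphi φ ∧ f (0 : R) = v + w :=
      ⟨0, 0, zero_mem _, zero_mem _, by rw [f0, add_zero]⟩
    have addP : ∀ {a b : R},
        (∃ v w : rngGen φ, v ∈ Vphi φ ∧ w ∈ Wphi φ ∧ f a = v + w) →
        (∃ v w : rngGen φ, v ∈ Vphi φ ∧ w ∈ Wphi φ ∧ f b = v + w) →
        (∃ v w : rngGen φ, v ∈ Vphi φ ∧ w ∈ Wphi φ ∧ f (a + b) = v + w) := by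
      rintro a b ⟨v, w, hv, hw, he⟩ ⟨v', w', hv', hw', he'⟩
      exact ⟨v + v', w + w', add_mem hv hv', add_mem hw hw', by rw [fadd, he, he']; abel⟩
    have negP : ∀ {a : R},
        (∃ v w : rngGen φ, v ∈ Vphi φ ∧ w ∈ Wphi φ ∧ f a = v + w) →
        (∃ v w : rngGen φ, v ∈ Vphi φ ∧ w ∈ Wphi φ ∧ f (-a) = v + w) := by
      rintro a ⟨v, w, hv, hw, he⟩
      exact ⟨-v, -w, neg_mem hv, neg_mem hw, by rw [fneg, he]; abel⟩
    have mlP : ∀ {x u : R},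
        (∃ v w : rngGen φ, v ∈ Vphi φ ∧ w ∈ Wphi φ ∧ f u = v + w) →
        (∃ v w : rngGen φ, v ∈ Vphi φ ∧ w ∈ Wphi φ ∧ f (x * u) = v + w) := by
      rintro x u ⟨v, w, hv, hw, he⟩
      refine ⟨f x * v + (f (x * u) - f x * f u), f x * w,
        add_mem (TwoSidedIdeal.mul_mem_left _ _ _ hv) (hgenV x u),
        TwoSidedIdeal.mul_mem_left _ _ _ hw, ?_⟩
      rw [he, mul_add]; abel
    have mrP : ∀ {u x : R},
        (∃ v w : rngGen φ, v ∈ Vphi φ ∧ w ∈ Wphi φ ∧ f u = v + w) →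
        (∃ v w : rngGen φ, v ∈ Vphi φ ∧ w ∈ Wphi φ ∧ f (u * x) = v + w) := by
      rintro u x ⟨v, w, hv, hw, he⟩
      refine ⟨v * f x + (f (u * x) - f u * f x), w * f x,
        add_mem (TwoSidedIdeal.mul_mem_right _ _ _ hv) (hgenV u x),
        TwoSidedIdeal.mul_mem_right _ _ _ hw, ?_⟩
      rw [he, add_mul]; abel
    have genP : ∀ z ∈ {z : R | ∃ x y : R, z = x * y - y * x},
        (∃ v w : rngGen φ, v ∈ Vphi φ ∧ w ∈ Wphi φ ∧ f z = v + w) := by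
      rintro z ⟨x, y, rfl⟩
      refine ⟨f (x * y) - f x * f y, f (x * y) - f y * f x, hgenV x y, hgenW x y, ?_⟩
      have h2 : f (y * x) = f x * f y + f y * f x - f (x * y) := by
        rw [← fkey x y]; abel
      rw [fsub, h2]; abel
    intro u hu
    have hu' := TwoSidedIdeal.mem_span_iff.mp hu
      (TwoSidedIdeal.mk'
        {u : R | ∃ v w : rngGen φ, v ∈ Vphi φ ∧ w ∈ Wphi φ ∧ f u = v + w}
        zeroP (fun ha hb => addP ha hb) (fun ha => negP ha)
        (fun hb => mlP hb) (fun ha => mrP ha))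
      (fun z hz => by simp only [SetLike.mem_coe, TwoSidedIdeal.mem_mk']; exact genP z hz)
    rwa [TwoSidedIdeal.mem_mk'] at hu'
  -- choose the components
  choose! v_ w_ hvV hwW heq using Pmem
  -- uniqueness of the decomposition
  have huniq : ∀ u ∈ commutatorIdeal R, ∀ v w : rngGen φ, v ∈ Vphi φ → w ∈ Wphi φ →
      f u = v + w → v_ u = v ∧ w_ u = w := by
    intro u hu v w hv hw he
    have hv' := hvV u hu
    have hw' := hwW u hu
    have he' := heq u hu
    have h2 : v_ u + w_ u = v + w := he'.symm.trans he
    have hd : v_ u - v = w - w_ u := by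
      calc v_ u - v = (v_ u + w_ u) - v - w_ u := by abel
        _ = (v + w) - v - w_ u := by rw [h2]
        _ = w - w_ u := by abel
    have hmemV : v_ u - v ∈ Vphi φ := sub_mem hv' hv
    have hmemW : v_ u - v ∈ Wphi φ := by rw [hd]; exact sub_mem hw hw'
    have hz0 : v_ u - v = 0 := hzero _ hmemV hmemW
    constructor
    · exact sub_eq_zero.mp hz0
    · rw [hd] at hz0
      exact (sub_eq_zero.mp hz0).symm
  refine ⟨w_, v_, ?_, ?_, ?_, ?_, ?_, ⟨Wphi φ, Vphi φ, fun u hu => (hwW u hu),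
    fun u hu => (hvV u hu), by rw [inf_comm]; exact hs⟩, ?_, ?_⟩
  · -- additivity of φ₁
    intro u hu u' hu'
    exact (huniq (u + u') (add_mem hu hu') (v_ u + v_ u') (w_ u + w_ u')
      (add_mem (hvV u hu) (hvV u' hu')) (add_mem (hwW u hu) (hwW u' hu'))
      (by rw [fadd, heq u hu, heq u' hu']; abel)).2
  · -- additivity of φ₂
    intro u hu u' hu'
    exact (huniq (u + u') (add_mem hu hu') (v_ u + v_ u') (w_ u + w_ u')
      (add_mem (hvV u hu) (hvV u' hu')) (add_mem (hwW u hu) (hwW u' hu'))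
      (by rw [fadd, heq u hu, heq u' hu']; abel)).1
  · -- multiplicativity of φ₁
    intro u hu u' hu'
    have hVW0 : v_ u * w_ u' = 0 :=
      hzero _ (TwoSidedIdeal.mul_mem_right _ _ _ (hvV u hu))
        (TwoSidedIdeal.mul_mem_left _ _ _ (hwW u' hu'))
    have hWV0 : w_ u * v_ u' = 0 :=
      hzero _ (TwoSidedIdeal.mul_mem_left _ _ _ (hvV u' hu'))
        (TwoSidedIdeal.mul_mem_right _ _ _ (hwW u hu))
    refine (huniq (u * u') (TwoSidedIdeal.mul_mem_right _ _ _ hu)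
      (v_ u * v_ u' + (f (u * u') - f u * f u')) (w_ u * w_ u')
      (add_mem (TwoSidedIdeal.mul_mem_right _ _ _ (hvV u hu)) (hgenV u u'))
      (TwoSidedIdeal.mul_mem_right _ _ _ (hwW u hu)) ?_).2
    rw [heq u hu, heq u' hu', mul_add, add_mul, add_mul, hVW0, hWV0]; abel
  · -- antimultiplicativity of φ₂
    intro u hu u' hu'
    have hVW0 : v_ u' * w_ u = 0 :=
      hzero _ (TwoSidedIdeal.mul_mem_right _ _ _ (hvV u' hu'))
        (TwoSidedIdeal.mul_mem_left _ _ _ (hwW u hu))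
    have hWV0 : w_ u' * v_ u = 0 :=
      hzero _ (TwoSidedIdeal.mul_mem_left _ _ _ (hvV u hu))
        (TwoSidedIdeal.mul_mem_right _ _ _ (hwW u' hu'))
    refine (huniq (u * u') (TwoSidedIdeal.mul_mem_right _ _ _ hu)
      (v_ u' * v_ u) (w_ u' * w_ u + (f (u * u') - f u' * f u))
      (TwoSidedIdeal.mul_mem_right _ _ _ (hvV u' hu'))
      (add_mem (TwoSidedIdeal.mul_mem_right _ _ _ (hwW u' hu')) (hgenW u u')) ?_).1
    rw [heq u hu, heq u' hu', mul_add, add_mul, add_mul, hVW0, hWV0]; abel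
  · -- φ = φ₁ + φ₂ on K
    intro u hu
    have h5 : φ u = (v_ u : R') + (w_ u : R') := congrArg Subtype.val (heq u hu)
    rw [h5, add_comm]
  · -- module conditions for φ₁
    intro u hu x
    have he := heq u hu
    constructor
    · have := (huniq (u * x) (TwoSidedIdeal.mul_mem_right _ _ _ hu)
        (v_ u * f x + (f (u * x) - f u * f x)) (w_ u * f x)
        (add_mem (TwoSidedIdeal.mul_mem_right _ _ _ (hvV u hu)) (hgenV u x))
        (TwoSidedIdeal.mul_mem_right _ _ _ (hwW u hu))
        (by rw [he, add_mul]; abel)).2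
      exact congrArg Subtype.val this
    · have := (huniq (x * u) (TwoSidedIdeal.mul_mem_left _ _ _ hu)
        (f x * v_ u + (f (x * u) - f x * f u)) (f x * w_ u)
        (add_mem (TwoSidedIdeal.mul_mem_left _ _ _ (hvV u hu)) (hgenV x u))
        (TwoSidedIdeal.mul_mem_left _ _ _ (hwW u hu))
        (by rw [he, mul_add]; abel)).2
      exact congrArg Subtype.val this
  · -- module conditions for φ₂
    intro u hu x
    have he := heq u hu
    constructor
    · have := (huniq (u * x) (TwoSidedIdeal.mul_mem_right _ _ _ hu)
        (f x * v_ u) (f x * w_ u + (f (u * x) - f x * f u))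
        (TwoSidedIdeal.mul_mem_left _ _ _ (hvV u hu))
        (add_mem (TwoSidedIdeal.mul_mem_left _ _ _ (hwW u hu)) (hgenW u x))
        (by rw [he, mul_add]; abel)).1
      exact congrArg Subtype.val this
    · have := (huniq (x * u) (TwoSidedIdeal.mul_mem_left _ _ _ hu)
        (v_ u * f x) (w_ u * f x + (f (x * u) - f u * f x))
        (TwoSidedIdeal.mul_mem_right _ _ _ (hvV u hu))
        (add_mem (TwoSidedIdeal.mul_mem_right _ _ _ (hwW u hu)) (hgenW x u))
        (by rw [he, add_mul]; abel)).1
      exact congrArg Subtype.val this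
end

section
/- Let R be a ring equal to its commutator ideal K. Then a Jordan homomorphism φ : R → R' is splittable if and only if φ is the sum of a homomorphism and an antihomomorphism on the whole ring R (taking I = R in the definition). -/
section JordanAux

variable {R R' : Type*} [NonUnitalRing R] [NonUnitalRing R']

/-- `φ` viewed as a map into `R'_φ`. -/
def PhiAux (φ : R → R') : R → rngGen φ := fun x =>
  ⟨φ x, NonUnitalSubring.subset_closure ⟨x, rfl⟩⟩

variable {φ : R → R'} (hφ : IsJordanHom φ)
include hφ

lemma PhiAux_add (x y : R) : PhiAux φ (x + y) = PhiAux φ x + PhiAux φ y :=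
  Subtype.ext (hφ.1 x y)

lemma PhiAux_zero : PhiAux φ 0 = 0 := by
  have h := PhiAux_add hφ 0 0
  rw [add_zero] at h
  exact (left_eq_add.mp h)

lemma PhiAux_neg (x : R) : PhiAux φ (-x) = - PhiAux φ x := by
  have h := PhiAux_add hφ x (-x)
  rw [add_neg_cancel, PhiAux_zero hφ] at h
  exact eq_neg_of_add_eq_zero_left (by rw [add_comm]; exact h.symm)

lemma PhiAux_sub (x y : R) : PhiAux φ (x - y) = PhiAux φ x - PhiAux φ y := by
  rw [sub_eq_add_neg, sub_eq_add_neg, PhiAux_add hφ, PhiAux_neg hφ]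

lemma PhiAux_jordan (x y : R) :
    PhiAux φ (x * y) + PhiAux φ (y * x) =
      PhiAux φ x * PhiAux φ y + PhiAux φ y * PhiAux φ x := by
  apply Subtype.ext
  have ha := hφ.1
  have hx2 := hφ.2.1 x
  have hy2 := hφ.2.1 y
  have hxy := hφ.2.1 (x + y)
  have h1 : (x + y) * (x + y) = x * x + ((x * y + y * x) + y * y) := by noncomm_ring
  have key : φ (x * x) + ((φ (x * y) + φ (y * x)) + φ (y * y))
      = φ x * φ x + ((φ x * φ y + φ y * φ x) + φ y * φ y) := by
    rw [← ha, ← ha, ← ha, ← h1, hxy, ha]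
    noncomm_ring
  rw [hx2, hy2] at key
  have key2 := add_left_cancel key
  exact add_right_cancel key2

omit hφ in
lemma PhiAux_vmem (x y : R) :
    PhiAux φ (x * y) - PhiAux φ x * PhiAux φ y ∈ Vphi φ :=
  TwoSidedIdeal.subset_span ⟨x, y, rfl⟩

omit hφ in
lemma PhiAux_wmem (x y : R) :
    PhiAux φ (x * y) - PhiAux φ y * PhiAux φ x ∈ Wphi φ :=
  TwoSidedIdeal.subset_span ⟨x, y, rfl⟩

lemma PhiAux_comm (x y : R) :
    PhiAux φ (x * y - y * x) =
      (PhiAux φ (x * y) - PhiAux φ x * PhiAux φ y) +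
      (PhiAux φ (x * y) - PhiAux φ y * PhiAux φ x) := by
  rw [PhiAux_sub hφ]
  have h := PhiAux_jordan hφ x y
  set a := PhiAux φ (x * y)
  set b := PhiAux φ (y * x)
  set p := PhiAux φ x * PhiAux φ y
  set q := PhiAux φ y * PhiAux φ x
  have h2 : (a - p) + (a - q) = (a + b) - (p + q) + (a - b) := by abel
  rw [h2, h]
  abel

end JordanAux

/-- If `R` equals its commutator ideal, then a Jordan homomorphism `φ : R → R'` is
splittable if and only if it is the sum of a homomorphism and an antihomomorphism on
the whole ring `R`. -/
theorem splittable_iff_isSumHomAntihom_of_commutatorIdeal_eq_top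
    {R R' : Type*} [NonUnitalRing R] [NonUnitalRing R']
    (hK : commutatorIdeal R = (⊤ : TwoSidedIdeal R))
    (φ : R → R') (hφ : IsJordanHom φ) :
    Splittable φ ↔ IsSumHomAntihomOn φ (⊤ : TwoSidedIdeal R) := by
  constructor
  · -- Splittable → sum of hom and antihom
    intro hsplit
    classical
    -- Step A: PhiAux φ u ∈ V ⊔ W for every u
    have hKmem : ∀ u : R, PhiAux φ u ∈ Vphi φ ⊔ Wphi φ := by
      obtain ⟨I', hI'⟩ : ∃ I' : TwoSidedIdeal R,
          ∀ z : R, z ∈ I' ↔ PhiAux φ z ∈ Vphi φ ⊔ Wphi φ := by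
        refine ⟨TwoSidedIdeal.mk' {u : R | PhiAux φ u ∈ Vphi φ ⊔ Wphi φ}
          ?_ ?_ ?_ ?_ ?_, fun z => TwoSidedIdeal.mem_mk' _ _ _ _ _ _ z⟩
        · simp only [Set.mem_setOf_eq, PhiAux_zero hφ]
          exact zero_mem _
        · intro x y hx hy
          simp only [Set.mem_setOf_eq, PhiAux_add hφ] at *
          exact add_mem hx hy
        · intro x hx
          simp only [Set.mem_setOf_eq, PhiAux_neg hφ] at *
          exact neg_mem hx
        · intro x y hy
          simp only [Set.mem_setOf_eq] at *
          have h : PhiAux φ (x * y)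
              = (PhiAux φ (x * y) - PhiAux φ x * PhiAux φ y)
                + PhiAux φ x * PhiAux φ y := by abel
          rw [h]
          exact add_mem (TwoSidedIdeal.mem_sup_left (PhiAux_vmem x y))
            (TwoSidedIdeal.mul_mem_left _ _ _ hy)
        · intro x y hx
          simp only [Set.mem_setOf_eq] at *
          have h : PhiAux φ (x * y)
              = (PhiAux φ (x * y) - PhiAux φ x * PhiAux φ y)
                + PhiAux φ x * PhiAux φ y := by abel
          rw [h]
          exact add_mem (TwoSidedIdeal.mem_sup_left (PhiAux_vmem x y))
            (TwoSidedIdeal.mul_mem_right _ _ _ hx)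
      intro u
      have hu : u ∈ commutatorIdeal R := by rw [hK]; trivial
      refine (hI' u).mp (TwoSidedIdeal.mem_span_iff.mp hu I' ?_)
      rintro z ⟨x, y, rfl⟩
      rw [SetLike.mem_coe, hI']
      rw [PhiAux_comm hφ]
      exact add_mem (TwoSidedIdeal.mem_sup_left (PhiAux_vmem x y))
        (TwoSidedIdeal.mem_sup_right (PhiAux_wmem x y))
    -- uniqueness of decompositions
    have hVW0 : ∀ a : rngGen φ, a ∈ Vphi φ → a ∈ Wphi φ → a = 0 := by
      intro a ha hb
      have h : a ∈ Vphi φ ⊓ Wphi φ := (TwoSidedIdeal.mem_inf _).mpr ⟨ha, hb⟩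
      rw [hsplit] at h
      exact (TwoSidedIdeal.mem_bot _).mp h
    have huniq : ∀ v w v' w' : rngGen φ, v ∈ Vphi φ → w ∈ Wphi φ →
        v' ∈ Vphi φ → w' ∈ Wphi φ → v + w = v' + w' → v = v' ∧ w = w' := by
      intro v w v' w' hv hw hv' hw' h
      have h1 : v - v' = w' - w := by
        have h' : v + w = w' + v' := by rw [h]; abel
        exact sub_eq_sub_iff_add_eq_add.mpr h'
      have h2 : v - v' = 0 := hVW0 _ (sub_mem hv hv') (h1 ▸ sub_mem hw' hw)
      refine ⟨sub_eq_zero.mp h2, ?_⟩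
      rw [h1] at h2
      exact (sub_eq_zero.mp h2).symm
    -- products of V and W elements vanish
    have hmul0 : ∀ v w : rngGen φ, v ∈ Vphi φ → w ∈ Wphi φ → v * w = 0 ∧ w * v = 0 := by
      intro v w hv hw
      exact ⟨hVW0 _ (TwoSidedIdeal.mul_mem_right _ _ _ hv)
          (TwoSidedIdeal.mul_mem_left _ _ _ hw),
        hVW0 _ (TwoSidedIdeal.mul_mem_left _ _ _ hv)
          (TwoSidedIdeal.mul_mem_right _ _ _ hw)⟩
    -- the decomposition
    have hdec : ∀ u : R, ∃ p : (rngGen φ) × (rngGen φ),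
        p.1 ∈ Vphi φ ∧ p.2 ∈ Wphi φ ∧ p.1 + p.2 = PhiAux φ u := by
      intro u
      obtain ⟨v, hv, w, hw, hvw⟩ := TwoSidedIdeal.mem_sup.mp (hKmem u)
      exact ⟨(v, w), hv, hw, hvw⟩
    set φ₂ : R → rngGen φ := fun u => (hdec u).choose.1 with hφ₂
    set φ₁ : R → rngGen φ := fun u => (hdec u).choose.2 with hφ₁
    have hspec : ∀ u : R, φ₂ u ∈ Vphi φ ∧ φ₁ u ∈ Wphi φ ∧ φ₂ u + φ₁ u = PhiAux φ u :=
      fun u => (hdec u).choose_spec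
    have hchar : ∀ (u : R) (v w : rngGen φ), v ∈ Vphi φ → w ∈ Wphi φ →
        v + w = PhiAux φ u → φ₂ u = v ∧ φ₁ u = w := by
      intro u v w hv hw h
      obtain ⟨h1, h2, h3⟩ := hspec u
      exact huniq _ _ _ _ h1 h2 hv hw (h3.trans h.symm)
    -- multiplicativity data
    have hmulchar : ∀ x y : R, φ₁ (x * y) = φ₁ x * φ₁ y ∧ φ₂ (x * y) = φ₂ y * φ₂ x := by
      intro x y
      obtain ⟨hx1, hx2, hx3⟩ := hspec x
      obtain ⟨hy1, hy2, hy3⟩ := hspec y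
      have hxy : PhiAux φ x * PhiAux φ y = φ₂ x * φ₂ y + φ₁ x * φ₁ y := by
        rw [← hx3, ← hy3]
        have e1 : φ₂ x * φ₁ y = 0 := (hmul0 _ _ hx1 hy2).1
        have e2 : φ₁ x * φ₂ y = 0 := (hmul0 _ _ hy1 hx2).2
        rw [add_mul, mul_add, mul_add, e1, e2]
        abel
      have hyx : PhiAux φ y * PhiAux φ x = φ₂ y * φ₂ x + φ₁ y * φ₁ x := by
        rw [← hx3, ← hy3]
        have e1 : φ₂ y * φ₁ x = 0 := (hmul0 _ _ hy1 hx2).1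
        have e2 : φ₁ y * φ₂ x = 0 := (hmul0 _ _ hx1 hy2).2
        rw [add_mul, mul_add, mul_add, e1, e2]
        abel
      constructor
      · have hdecomp : ((PhiAux φ (x * y) - PhiAux φ x * PhiAux φ y) + φ₂ x * φ₂ y)
            + φ₁ x * φ₁ y = PhiAux φ (x * y) := by rw [hxy]; abel
        exact (hchar (x * y) _ _
          (add_mem (PhiAux_vmem x y) (TwoSidedIdeal.mul_mem_right _ _ _ hx1))
          (TwoSidedIdeal.mul_mem_right _ _ _ hx2) hdecomp).2
      · have hdecomp : (φ₂ y * φ₂ x) + ((PhiAux φ (x * y) - PhiAux φ y * PhiAux φ x)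
            + φ₁ y * φ₁ x) = PhiAux φ (x * y) := by rw [hyx]; abel
        exact (hchar (x * y) _ _
          (TwoSidedIdeal.mul_mem_right _ _ _ hy1)
          (add_mem (PhiAux_wmem x y) (TwoSidedIdeal.mul_mem_right _ _ _ hy2)) hdecomp).1
    refine ⟨φ₁, φ₂, ?_, ?_, ?_, ?_, ?_, ?_, ?_, ?_⟩
    · -- additivity of φ₁
      intro u _ v _
      have h : (φ₂ u + φ₂ v) + (φ₁ u + φ₁ v) = PhiAux φ (u + v) := by
        rw [PhiAux_add hφ, ← (hspec u).2.2, ← (hspec v).2.2]; abel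
      exact (hchar (u + v) _ _ (add_mem (hspec u).1 (hspec v).1)
        (add_mem (hspec u).2.1 (hspec v).2.1) h).2
    · -- additivity of φ₂
      intro u _ v _
      have h : (φ₂ u + φ₂ v) + (φ₁ u + φ₁ v) = PhiAux φ (u + v) := by
        rw [PhiAux_add hφ, ← (hspec u).2.2, ← (hspec v).2.2]; abel
      exact (hchar (u + v) _ _ (add_mem (hspec u).1 (hspec v).1)
        (add_mem (hspec u).2.1 (hspec v).2.1) h).1
    · intro u _ v _; exact (hmulchar u v).1
    · intro u _ v _; exact (hmulchar u v).2
    · intro u _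
      have h := congrArg (fun a : rngGen φ => (a : R')) ((hspec u).2.2)
      push_cast at h
      calc φ u = ((PhiAux φ u : rngGen φ) : R') := rfl
        _ = (φ₂ u : R') + (φ₁ u : R') := h.symm
        _ = (φ₁ u : R') + (φ₂ u : R') := add_comm _ _
    · exact ⟨Wphi φ, Vphi φ, fun u _ => (hspec u).2.1, fun u _ => (hspec u).1,
        by rw [inf_comm]; exact hsplit⟩
    · intro u _ x
      obtain ⟨hx1, hx2, hx3⟩ := hspec x
      obtain ⟨hu1, hu2, hu3⟩ := hspec u
      constructor
      · have h2 : φ₁ u * PhiAux φ x = φ₁ u * φ₁ x := by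
          rw [← hx3, mul_add, (hmul0 _ _ hx1 hu2).2, zero_add]
        have h : φ₁ (u * x) = φ₁ u * PhiAux φ x := by rw [(hmulchar u x).1, h2]
        calc (φ₁ (u * x) : R') = ((φ₁ u * PhiAux φ x : rngGen φ) : R') := by rw [h]
          _ = (φ₁ u : R') * φ x := by push_cast; rfl
      · have h2 : PhiAux φ x * φ₁ u = φ₁ x * φ₁ u := by
          rw [← hx3, add_mul, (hmul0 _ _ hx1 hu2).1, zero_add]
        have h : φ₁ (x * u) = PhiAux φ x * φ₁ u := by rw [(hmulchar x u).1, h2]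
        calc (φ₁ (x * u) : R') = ((PhiAux φ x * φ₁ u : rngGen φ) : R') := by rw [h]
          _ = φ x * (φ₁ u : R') := by push_cast; rfl
    · intro u _ x
      obtain ⟨hx1, hx2, hx3⟩ := hspec x
      obtain ⟨hu1, hu2, hu3⟩ := hspec u
      constructor
      · have h2 : PhiAux φ x * φ₂ u = φ₂ x * φ₂ u := by
          rw [← hx3, add_mul, (hmul0 _ _ hu1 hx2).2, add_zero]
        have h : φ₂ (u * x) = PhiAux φ x * φ₂ u := by rw [(hmulchar u x).2, h2]
        calc (φ₂ (u * x) : R') = ((PhiAux φ x * φ₂ u : rngGen φ) : R') := by rw [h]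
          _ = φ x * (φ₂ u : R') := by push_cast; rfl
      · have h2 : φ₂ u * PhiAux φ x = φ₂ u * φ₂ x := by
          rw [← hx3, mul_add, (hmul0 _ _ hu1 hx2).1, add_zero]
        have h : φ₂ (x * u) = φ₂ u * PhiAux φ x := by rw [(hmulchar x u).2, h2]
        calc (φ₂ (x * u) : R') = ((φ₂ u * PhiAux φ x : rngGen φ) : R') := by rw [h]
          _ = (φ₂ u : R') * φ x := by push_cast; rfl
  · -- sum of hom and antihom → Splittable
    rintro ⟨φ₁, φ₂, hadd1, hadd2, hmul1, hmul2, hsum, ⟨J₁, J₂, hJ1, hJ2, hJ⟩, hc, hd⟩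
    have htop : ∀ u : R, u ∈ (⊤ : TwoSidedIdeal R) := fun _ => trivial
    have hcross : ∀ x y : R, φ₁ x * φ₂ y = 0 ∧ φ₂ x * φ₁ y = 0 := by
      intro x y
      constructor
      · have h1 : φ₁ x * φ₂ y ∈ J₁ := TwoSidedIdeal.mul_mem_right _ _ _ (hJ1 x (htop x))
        have h2 : φ₁ x * φ₂ y ∈ J₂ := TwoSidedIdeal.mul_mem_left _ _ _ (hJ2 y (htop y))
        have h : φ₁ x * φ₂ y ∈ J₁ ⊓ J₂ := (TwoSidedIdeal.mem_inf _).mpr ⟨h1, h2⟩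
        rw [hJ] at h
        exact (TwoSidedIdeal.mem_bot _).mp h
      · have h1 : φ₂ x * φ₁ y ∈ J₂ := TwoSidedIdeal.mul_mem_right _ _ _ (hJ2 x (htop x))
        have h2 : φ₂ x * φ₁ y ∈ J₁ := TwoSidedIdeal.mul_mem_left _ _ _ (hJ1 y (htop y))
        have h : φ₂ x * φ₁ y ∈ J₁ ⊓ J₂ := (TwoSidedIdeal.mem_inf _).mpr ⟨h2, h1⟩
        rw [hJ] at h
        exact (TwoSidedIdeal.mem_bot _).mp h
    have hVJ2 : Vphi φ ≤ J₂ := by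
      intro a ha
      refine TwoSidedIdeal.mem_span_iff.mp ha J₂ ?_
      rintro b ⟨x, y, hb⟩
      have hbval : b = φ₂ (x * y) - φ₂ x * φ₂ y := by
        apply Subtype.ext
        push_cast
        rw [hb, hsum (x * y) (htop _), hsum x (htop x), hsum y (htop y)]
        have e1 : (φ₁ (x * y) : R') = ((φ₁ x * φ₁ y : rngGen φ) : R') := by
          rw [hmul1 x (htop x) y (htop y)]
        have e2 : ((φ₁ x * φ₂ y : rngGen φ) : R') = ((0 : rngGen φ) : R') := by
          rw [(hcross x y).1]
        have e3 : ((φ₂ x * φ₁ y : rngGen φ) : R') = ((0 : rngGen φ) : R') := by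
          rw [(hcross x y).2]
        push_cast at e1 e2 e3
        rw [add_mul, mul_add, mul_add, e1, e2, e3]
        abel
      rw [SetLike.mem_coe, hbval]
      exact sub_mem (hJ2 _ (htop _)) (TwoSidedIdeal.mul_mem_right _ _ _ (hJ2 x (htop x)))
    have hWJ1 : Wphi φ ≤ J₁ := by
      intro a ha
      refine TwoSidedIdeal.mem_span_iff.mp ha J₁ ?_
      rintro b ⟨x, y, hb⟩
      have hbval : b = φ₁ (x * y) - φ₁ y * φ₁ x := by
        apply Subtype.ext
        push_cast
        rw [hb, hsum (x * y) (htop _), hsum y (htop y), hsum x (htop x)]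
        have e1 : (φ₂ (x * y) : R') = ((φ₂ y * φ₂ x : rngGen φ) : R') := by
          rw [hmul2 x (htop x) y (htop y)]
        have e2 : ((φ₁ y * φ₂ x : rngGen φ) : R') = ((0 : rngGen φ) : R') := by
          rw [(hcross y x).1]
        have e3 : ((φ₂ y * φ₁ x : rngGen φ) : R') = ((0 : rngGen φ) : R') := by
          rw [(hcross y x).2]
        push_cast at e1 e2 e3
        rw [add_mul, mul_add, mul_add, e1, e2, e3]
        abel
      rw [SetLike.mem_coe, hbval]
      exact sub_mem (hJ1 _ (htop _)) (TwoSidedIdeal.mul_mem_right _ _ _ (hJ1 y (htop y)))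
    rw [Splittable, eq_bot_iff]
    intro a ha
    obtain ⟨haV, haW⟩ := (TwoSidedIdeal.mem_inf _).mp ha
    have h : a ∈ J₁ ⊓ J₂ := (TwoSidedIdeal.mem_inf _).mpr ⟨hWJ1 haW, hVJ2 haV⟩
    rw [hJ] at h
    exact (TwoSidedIdeal.mem_bot _).mpr ((TwoSidedIdeal.mem_bot _).mp h)
end
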